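/- arXiv:1306.0922 — 9 statements merged into one kernel-verified Lean document; each statement's English description precedes it below -/
import Mathlib

section
/- If f : ℝ → ℂ^p is almost automorphic (in Bochner's sense), then the function t ↦ f(⌊t⌋) (where ⌊·⌋ is the greatest integer function) is Z-almost automorphic. -/
open MeasureTheory Filter Topology

/-- Bounded, piecewise continuous: continuous on ℝ ∖ ℤ with finite one-sided
limits at every integer. -/
def BddPC (p : ℕ) (f : ℝ → Fin p → ℂ) : Prop :=
  (∃ C : ℝ, ∀ t : ℝ, ‖f t‖ ≤ C) ∧
  ContinuousOn f {t : ℝ | ∀ n : ℤ, t ≠ (n : ℝ)} ∧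
  ∀ n : ℤ, (∃ L : Fin p → ℂ, Tendsto f (𝓝[<] (n : ℝ)) (𝓝 L)) ∧
           (∃ R : Fin p → ℂ, Tendsto f (𝓝[>] (n : ℝ)) (𝓝 R))

/-- `ℤ`-almost automorphic functions. -/
def ZAlmostAutomorphic (p : ℕ) (f : ℝ → Fin p → ℂ) : Prop :=
  BddPC p f ∧
  ∀ s : ℕ → ℤ, ∃ (φ : ℕ → ℕ) (g : ℝ → Fin p → ℂ), StrictMono φ ∧
    (∀ t : ℝ, Tendsto (fun n => f (t + (s (φ n) : ℝ))) atTop (𝓝 (g t))) ∧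
    (∀ t : ℝ, Tendsto (fun n => g (t - (s (φ n) : ℝ))) atTop (𝓝 (f t)))

/-- Almost automorphic functions in the sense of Bochner. -/
def AlmostAutomorphic (p : ℕ) (f : ℝ → Fin p → ℂ) : Prop :=
  (∃ C : ℝ, ∀ t : ℝ, ‖f t‖ ≤ C) ∧ Continuous f ∧
  ∀ s : ℕ → ℝ, ∃ (φ : ℕ → ℕ) (g : ℝ → Fin p → ℂ), StrictMono φ ∧
    (∀ t : ℝ, Tendsto (fun n => f (t + s (φ n))) atTop (𝓝 (g t))) ∧
    (∀ t : ℝ, Tendsto (fun n => g (t - s (φ n))) atTop (𝓝 (f t)))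

/-! Restricted to `ℤ`, a Bochner almost automorphic function is an almost automorphic sequence.
The step function `t ↦ F ⌊t⌋` of any bounded sequence is piecewise continuous, since the floor is locally constant off `ℤ` and has one-sided limits at
the integers; and because `⌊t + m⌋ = ⌊t⌋ + m` for integer `m`, the recurrence property of `F`
along integer sequences transfers verbatim to `t ↦ F ⌊t⌋` with limit `t ↦ G ⌊t⌋`. -/

section FloorComp

theorem Filter.Tendsto.comp_floor_nhds {α X : Type*} [Ring α] [LinearOrder α] [FloorRing α]
    [TopologicalSpace X] {l : Filter α} {m : ℤ}
    (h : Tendsto (Int.floor : α → ℤ) l (pure m)) (F : ℤ → X) :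
    Tendsto (fun t : α => F ⌊t⌋) l (𝓝 (F m)) :=
  ((tendsto_pure_pure F m).comp h).mono_right (pure_le_nhds _)

variable {α X : Type*} [Ring α] [LinearOrder α] [IsStrictOrderedRing α] [FloorRing α]
  [TopologicalSpace α] [OrderTopology α] [TopologicalSpace X]

theorem Int.tendsto_floor_nhds_pure_of_notMem {t : α} (ht : t ∉ Set.range Int.cast) :
    Tendsto (Int.floor : α → ℤ) (𝓝 t) (pure ⌊t⌋) := by
  have hleft : Tendsto (Int.floor : α → ℤ) (𝓝[<] t) (pure ⌊t⌋) := by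
    simpa [(Int.ceil_eq_floor_add_one_iff_notMem t).2 ht] using
      tendsto_floor_left_pure_ceil_sub_one t
  rw [← nhdsLT_sup_nhdsGE]
  exact hleft.sup (tendsto_floor_right_pure_floor t)

theorem continuousOn_comp_floor (F : ℤ → X) :
    ContinuousOn (fun t : α => F ⌊t⌋) {t : α | ∀ n : ℤ, t ≠ n} := fun t ht =>
  ContinuousAt.continuousWithinAt <|
    (Int.tendsto_floor_nhds_pure_of_notMem (t := t)
      (by rintro ⟨n, rfl⟩; exact ht n rfl)).comp_floor_nhds F

theorem tendsto_comp_floor_nhdsLT (F : ℤ → X) (n : ℤ) :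
    Tendsto (fun t : α => F ⌊t⌋) (𝓝[<] (n : α)) (𝓝 (F (n - 1))) :=
  (tendsto_floor_left_pure_sub_one n).comp_floor_nhds F

theorem tendsto_comp_floor_nhdsGT (F : ℤ → X) (n : ℤ) :
    Tendsto (fun t : α => F ⌊t⌋) (𝓝[>] (n : α)) (𝓝 (F n)) :=
  ((tendsto_floor_right_pure n).mono_left
    (nhdsWithin_mono _ Set.Ioi_subset_Ici_self)).comp_floor_nhds F

end FloorComp

def AlmostAutomorphicSeq (p : ℕ) (F : ℤ → Fin p → ℂ) : Prop :=
  (∃ C : ℝ, ∀ m : ℤ, ‖F m‖ ≤ C) ∧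
  ∀ s : ℕ → ℤ, ∃ (φ : ℕ → ℕ) (G : ℤ → Fin p → ℂ), StrictMono φ ∧
    (∀ m : ℤ, Tendsto (fun n => F (m + s (φ n))) atTop (𝓝 (G m))) ∧
    (∀ m : ℤ, Tendsto (fun n => G (m - s (φ n))) atTop (𝓝 (F m)))

theorem AlmostAutomorphic.almostAutomorphicSeq_intCast {p : ℕ} {f : ℝ → Fin p → ℂ}
    (hf : AlmostAutomorphic p f) : AlmostAutomorphicSeq p (fun m : ℤ => f m) := by
  obtain ⟨⟨C, hC⟩, -, hrec⟩ := hf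
  refine ⟨⟨C, fun m => hC m⟩, fun s => ?_⟩
  obtain ⟨φ, g, hφ, hfg, hgf⟩ := hrec (fun n => s n)
  exact ⟨φ, fun m => g m, hφ, fun m => by simpa using hfg m, fun m => by simpa using hgf m⟩

theorem bddPC_comp_floor {p : ℕ} {F : ℤ → Fin p → ℂ}
    (hF : ∃ C : ℝ, ∀ m : ℤ, ‖F m‖ ≤ C) :
    BddPC p (fun t : ℝ => F ⌊t⌋) :=
  let ⟨C, hC⟩ := hF
  ⟨⟨C, fun t => hC ⌊t⌋⟩, continuousOn_comp_floor F,
    fun n => ⟨⟨_, tendsto_comp_floor_nhdsLT F n⟩, ⟨_, tendsto_comp_floor_nhdsGT F n⟩⟩⟩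

theorem AlmostAutomorphicSeq.zAlmostAutomorphic_comp_floor {p : ℕ} {F : ℤ → Fin p → ℂ}
    (hF : AlmostAutomorphicSeq p F) : ZAlmostAutomorphic p (fun t : ℝ => F ⌊t⌋) := by
  obtain ⟨hbdd, hrec⟩ := hF
  refine ⟨bddPC_comp_floor hbdd, fun s => ?_⟩
  obtain ⟨φ, G, hφ, hFG, hGF⟩ := hrec s
  refine ⟨φ, fun t => G ⌊t⌋, hφ, fun t => ?_, fun t => ?_⟩
  · simpa only [Int.floor_add_intCast] using hFG ⌊t⌋
  · simpa only [Int.floor_sub_intCast] using hGF ⌊t⌋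

/-- If `f : ℝ → ℂ^p` is almost automorphic in Bochner's sense, then
`t ↦ f(⌊t⌋)` is `ℤ`-almost automorphic. -/
theorem aa_comp_floor_isZAlmostAutomorphic {p : ℕ} (f : ℝ → Fin p → ℂ)
    (hf : AlmostAutomorphic p f) :
    ZAlmostAutomorphic p (fun t : ℝ => f ((⌊t⌋ : ℤ) : ℝ)) :=
  hf.almostAutomorphicSeq_intCast.zAlmostAutomorphic_comp_floor
end

section
/- If (f_k) is a sequence of Z-almost automorphic functions from ℝ to ℂ^p that converges uniformly on ℝ to a function f, then f is Z-almost automorphic. Consequently, the space of Z-almost automorphic functions is a Banach space under the norm of uniform convergence. -/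
/-!
For integer shifts `s`, a diagonal extraction gives a single subsequence `d` along which every
`F k` has its limit `g k` in the sense of almost automorphy. Pointwise limits do not increase
uniform distances, so `sup ‖g k - g m‖ ≤ sup ‖F k - F m‖`: the `g k` are uniformly Cauchy and
converge uniformly to some `g`, which allows exchanging the limits in `k` and in `n` in
`F k (t + s (d n)) → g k t` and `g k (t - s (d n)) → F k t`. The one-sided limits at integers
pass to the uniform limit by the same exchange of limits.
-/

open MeasureTheory Filter Topology

section UniformLimits

variable {ι α γ δ β : Type*} [UniformSpace β] {p : Filter ι} {F : ι → α → β} {f : α → β}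
  {l : Filter γ}

theorem UniformCauchySeqOn.of_tendsto_comp (hF : UniformCauchySeqOn F p Set.univ) [l.NeBot]
    {v : δ → γ → α} {g : ι → δ → β}
    (hg : ∀ k x, Tendsto (fun j => F k (v x j)) l (𝓝 (g k x))) :
    UniformCauchySeqOn g p Set.univ := by
  intro U hU
  obtain ⟨V, ⟨hV, hV_closed⟩, hVU⟩ := uniformity_hasBasis_closed.mem_iff.1 hU
  filter_upwards [hF V hV] with kk hkk x _
  exact hVU (hV_closed.mem_of_tendsto ((hg kk.1 x).prodMk_nhds (hg kk.2 x))
    (Eventually.of_forall fun j => hkk _ trivial))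

theorem TendstoUniformly.exists_tendstoUniformly_of_tendsto_comp [CompleteSpace β] [p.NeBot]
    (hF : TendstoUniformly F f p) [l.NeBot] {v : δ → γ → α} {g : ι → δ → β}
    (hg : ∀ k x, Tendsto (fun j => F k (v x j)) l (𝓝 (g k x))) :
    ∃ G : δ → β, TendstoUniformly g G p ∧ ∀ x, Tendsto (fun j => f (v x j)) l (𝓝 (G x)) := by
  have hg_cauchy := (tendstoUniformlyOn_univ.2 hF).uniformCauchySeqOn.of_tendsto_comp hg
  choose G hG using fun x => CompleteSpace.complete (hg_cauchy.cauchy_map (Set.mem_univ x))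
  have hgG : TendstoUniformly g G p :=
    tendstoUniformlyOn_univ.1 (hg_cauchy.tendstoUniformlyOn_of_tendsto fun x _ => hG x)
  exact ⟨G, hgG, fun x => (hF.comp (v x)).tendsto_of_eventually_tendsto
    (Eventually.of_forall fun k => hg k x) (hgG.tendsto_at x)⟩

theorem TendstoUniformly.exists_tendsto_of_forall_exists_tendsto [CompleteSpace β] [p.NeBot]
    (hF : TendstoUniformly F f p) {l : Filter α} [l.NeBot]
    (h : ∀ k, ∃ L, Tendsto (F k) l (𝓝 L)) : ∃ L, Tendsto f l (𝓝 L) := by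
  choose L hL using h
  obtain ⟨G, -, hG⟩ := hF.exists_tendstoUniformly_of_tendsto_comp (v := fun (_ : Unit) => id)
    (g := fun k _ => L k) fun k _ => hL k
  exact ⟨G (), hG ()⟩

theorem TendstoUniformly.exists_norm_le {E : Type*} [SeminormedAddCommGroup E] [p.NeBot]
    {F : ι → α → E} {f : α → E} (hF : TendstoUniformly F f p)
    (h : ∀ k, ∃ C, ∀ t, ‖F k t‖ ≤ C) : ∃ C, ∀ t, ‖f t‖ ≤ C := by
  obtain ⟨k, hk⟩ := (Metric.tendstoUniformly_iff.1 hF 1 one_pos).exists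
  obtain ⟨C, hC⟩ := h k
  refine ⟨C + 1, fun t => ?_⟩
  calc ‖f t‖ ≤ ‖F k t‖ + ‖f t - F k t‖ := norm_le_insert' _ _
    _ ≤ C + 1 := add_le_add (hC t) ((dist_eq_norm _ _).symm.trans_lt (hk t)).le

end UniformLimits

theorem BddPC.of_tendstoUniformly {p : ℕ} {F : ℕ → ℝ → Fin p → ℂ} {f : ℝ → Fin p → ℂ}
    (hF : ∀ k, BddPC p (F k)) (hconv : TendstoUniformly F f atTop) : BddPC p f :=
  ⟨hconv.exists_norm_le fun k => (hF k).1,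
    hconv.tendstoUniformlyOn.continuousOn (Frequently.of_forall fun k => (hF k).2.1),
    fun n => ⟨hconv.exists_tendsto_of_forall_exists_tendsto fun k => ((hF k).2.2 n).1,
      hconv.exists_tendsto_of_forall_exists_tendsto fun k => ((hF k).2.2 n).2⟩⟩

theorem exists_strictMono_forall_of_exists_subseq (P : ℕ → (ℕ → ℕ) → Prop)
    (hcomp : ∀ k σ (ρ : ℕ → ℕ), Tendsto ρ atTop atTop → P k σ → P k (σ ∘ ρ))
    (hcongr : ∀ k (σ σ' : ℕ → ℕ), σ =ᶠ[atTop] σ' → P k σ → P k σ')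
    (hsubseq : ∀ k σ, ∃ τ : ℕ → ℕ, StrictMono τ ∧ P k (σ ∘ τ)) :
    ∃ d : ℕ → ℕ, StrictMono d ∧ ∀ k, P k d := by
  choose T hT_mono hTP using hsubseq
  -- Nested subsequences `σ (k + 1) ⊆ σ k`; the diagonal `n ↦ σ (n + 1) n` is, from index `k` on,
  -- a reparametrization of `σ (k + 1)`.
  let σ : ℕ → ℕ → ℕ := fun k => Nat.rec (motive := fun _ => ℕ → ℕ) id (fun k σk => σk ∘ T k σk) k
  have hσ_succ : ∀ k, σ (k + 1) = σ k ∘ T k (σ k) := fun _ => rfl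
  have hσ_mono : ∀ k, StrictMono (σ k) := by
    intro k
    induction k with
    | zero => exact strictMono_id
    | succ k ih => exact ih.comp (hT_mono k _)
  have hσ_subseq : ∀ k m, ∃ χ, StrictMono χ ∧ σ (k + m) = σ k ∘ χ := by
    intro k m
    induction m with
    | zero => exact ⟨id, strictMono_id, rfl⟩
    | succ m ih =>
      obtain ⟨χ, hχ, h⟩ := ih
      exact ⟨χ ∘ T (k + m) (σ (k + m)), hχ.comp (hT_mono _ _), by rw [← add_assoc, hσ_succ, h]; rfl⟩
  refine ⟨fun n => σ (n + 1) n, strictMono_nat_of_lt_succ fun n => ?_, fun k => ?_⟩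
  · show σ (n + 1) n < σ (n + 1 + 1) (n + 1)
    rw [hσ_succ (n + 1)]
    exact hσ_mono (n + 1) ((Nat.lt_succ_self n).trans_le (hT_mono _ _).le_apply)
  · have h_tail : ∀ n, ∃ m, n ≤ m ∧ (k ≤ n → σ (n + 1) n = σ (k + 1) m) := by
      intro n
      by_cases hkn : k ≤ n
      · obtain ⟨χ, hχ, h⟩ := hσ_subseq (k + 1) (n - k)
        refine ⟨χ n, hχ.le_apply, fun _ => ?_⟩
        rw [show n + 1 = k + 1 + (n - k) by omega, h]
        rfl
      · exact ⟨n, le_rfl, fun h => absurd h hkn⟩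
    choose ρ hρ_ge hρ using h_tail
    refine hcongr k _ _ ?_ (hcomp k _ ρ (tendsto_atTop_mono hρ_ge tendsto_id) (hTP k (σ k)))
    filter_upwards [eventually_ge_atTop k] with n hn
    exact (hρ n hn).symm

def AlmostAutomorphicAlong {G E : Type*} [Add G] [Sub G] [TopologicalSpace E] (f : G → E)
    (u : ℕ → G) : Prop :=
  ∃ g : G → E, (∀ t, Tendsto (fun n => f (t + u n)) atTop (𝓝 (g t))) ∧
    ∀ t, Tendsto (fun n => g (t - u n)) atTop (𝓝 (f t))

namespace AlmostAutomorphicAlong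

variable {G E : Type*} [Add G] [Sub G] {f : G → E} {u : ℕ → G}

theorem comp_tendsto [TopologicalSpace E] (h : AlmostAutomorphicAlong f u) {ρ : ℕ → ℕ}
    (hρ : Tendsto ρ atTop atTop) : AlmostAutomorphicAlong f (u ∘ ρ) :=
  let ⟨g, h₁, h₂⟩ := h
  ⟨g, fun t => (h₁ t).comp hρ, fun t => (h₂ t).comp hρ⟩

theorem congr [TopologicalSpace E] (h : AlmostAutomorphicAlong f u) {v : ℕ → G}
    (huv : u =ᶠ[atTop] v) : AlmostAutomorphicAlong f v := by
  obtain ⟨g, h₁, h₂⟩ := h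
  refine ⟨g, fun t => (h₁ t).congr' ?_, fun t => (h₂ t).congr' ?_⟩ <;>
    filter_upwards [huv] with n hn <;> rw [hn]

theorem of_tendstoUniformly {ι : Type*} [UniformSpace E] [CompleteSpace E] {p : Filter ι}
    [p.NeBot] {F : ι → G → E} (hF : ∀ k, AlmostAutomorphicAlong (F k) u)
    (hconv : TendstoUniformly F f p) : AlmostAutomorphicAlong f u := by
  choose g hg₁ hg₂ using hF
  obtain ⟨g', hgg', hg'⟩ := hconv.exists_tendstoUniformly_of_tendsto_comp hg₁
  exact ⟨g', hg', fun t => (hgg'.comp _).tendsto_of_eventually_tendsto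
    (Eventually.of_forall fun k => hg₂ k t) (hconv.tendsto_at t)⟩

end AlmostAutomorphicAlong

/-- A uniform limit of `ℤ`-almost automorphic functions is `ℤ`-almost automorphic
(hence the space of `ℤ`-almost automorphic functions, being closed in the space of
bounded functions, is a Banach space under the norm of uniform convergence). -/
theorem zAlmostAutomorphic_of_tendstoUniformly {p : ℕ}
    (F : ℕ → ℝ → Fin p → ℂ) (f : ℝ → Fin p → ℂ)
    (hF : ∀ k : ℕ, ZAlmostAutomorphic p (F k))
    (hconv : TendstoUniformly F f atTop) :
    ZAlmostAutomorphic p f := by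
  refine ⟨BddPC.of_tendstoUniformly (fun k => (hF k).1) hconv, fun s => ?_⟩
  obtain ⟨d, hd, hFd⟩ := exists_strictMono_forall_of_exists_subseq
    (fun k σ => AlmostAutomorphicAlong (F k) fun n => (s (σ n) : ℝ))
    (fun _ _ _ hρ h => h.comp_tendsto hρ)
    (fun _ _ _ hσ h => h.congr (by filter_upwards [hσ] with n hn; rw [hn]))
    (fun k σ =>
      let ⟨φ, g, hφ, h₁, h₂⟩ := (hF k).2 (s ∘ σ)
      ⟨φ, hφ, g, h₁, h₂⟩)
  obtain ⟨g, hg₁, hg₂⟩ := AlmostAutomorphicAlong.of_tendstoUniformly hFd hconv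
  exact ⟨d, g, hd, hg₁, hg₂⟩
end

section
/- If G : ℂ^p → ℂ^p is a continuous function and f : ℝ → ℂ^p is Z-almost automorphic, then the composition t ↦ G(f(t)) is Z-almost automorphic. -/
open MeasureTheory Filter Topology

/-- If `G : ℂ^p → ℂ^p` is continuous and `f` is `ℤ`-almost automorphic, then
`t ↦ G (f t)` is `ℤ`-almost automorphic. -/
theorem zAlmostAutomorphic_comp_continuous {p : ℕ}
    (G : (Fin p → ℂ) → Fin p → ℂ) (hG : Continuous G)
    (f : ℝ → Fin p → ℂ) (hf : ZAlmostAutomorphic p f) :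
    ZAlmostAutomorphic p (fun t : ℝ => G (f t)) := by
  obtain ⟨⟨⟨C, hC⟩, hcont, hlim⟩, haa⟩ := hf
  refine ⟨⟨?_, ?_, ?_⟩, ?_⟩
  · -- boundedness
    have hK : IsCompact (Metric.closedBall (0 : Fin p → ℂ) C) :=
      isCompact_closedBall _ _
    have hKG : IsCompact (G '' Metric.closedBall (0 : Fin p → ℂ) C) :=
      hK.image hG
    obtain ⟨r, hr⟩ := hKG.isBounded.subset_closedBall 0
    refine ⟨r, fun t => ?_⟩
    have : G (f t) ∈ Metric.closedBall (0 : Fin p → ℂ) r :=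
      hr ⟨f t, by simpa [Metric.mem_closedBall, dist_zero_right] using hC t, rfl⟩
    simpa [Metric.mem_closedBall, dist_zero_right] using this
  · exact hG.comp_continuousOn hcont
  · intro n
    obtain ⟨⟨L, hL⟩, R, hR⟩ := hlim n
    exact ⟨⟨G L, (hG.continuousAt.tendsto.comp hL)⟩,
           ⟨G R, (hG.continuousAt.tendsto.comp hR)⟩⟩
  · intro s
    obtain ⟨φ, g, hφ, h1, h2⟩ := haa s
    refine ⟨φ, fun t => G (g t), hφ, fun t => ?_, fun t => ?_⟩
    · exact hG.continuousAt.tendsto.comp (h1 t)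
    · exact hG.continuousAt.tendsto.comp (h2 t)
end

section
/- Let f : ℝ × ℂ^p → ℂ^p be bounded, continuous, almost automorphic uniformly on compact subsets of ℂ^p, and uniformly continuous on compact subsets of ℂ^p uniformly in t ∈ ℝ (i.e. for every compact K ⊆ ℂ^p and ε > 0 there is δ > 0 such that |f(t,x) − f(t,y)| < ε for all t ∈ ℝ and all x, y ∈ K with |x − y| < δ). If ψ : ℝ → ℂ^p is Z-almost automorphic, then the function t ↦ f(t, ψ(t)) is Z-almost automorphic. -/
open MeasureTheory Filter Topology

/-- Almost automorphy, uniformly on compact subsets of `ℂ^p`, for a function of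
two variables `f : ℝ × ℂ^p → ℂ^p`. -/
def AAUniformOnCompact (p : ℕ) (f : ℝ → (Fin p → ℂ) → Fin p → ℂ) : Prop :=
  ∀ K : Set (Fin p → ℂ), IsCompact K → ∀ s : ℕ → ℝ,
    ∃ (φ : ℕ → ℕ) (g : ℝ → (Fin p → ℂ) → Fin p → ℂ), StrictMono φ ∧
      (∀ t : ℝ, ∀ x ∈ K, Tendsto (fun n => f (t + s (φ n)) x) atTop (𝓝 (g t x))) ∧
      (∀ t : ℝ, ∀ x ∈ K, Tendsto (fun n => g (t - s (φ n)) x) atTop (𝓝 (f t x)))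

open scoped Uniformity

/-!
Pass to a subsequence along which `ψ(· + sₙ) → ψ'` and `ψ'(· - sₙ) → ψ` pointwise, and then to
a further one along which `f(· + sₙ, x) → f'(·, x)` and back on the compact ball `K` containing
the range of `ψ`. Uniform continuity of `f` on `K`, uniformly in `t`, says that the family
`(f t)ₜ` is uniformly equicontinuous on `K`, and this passes to the pointwise limits `(f' t)ₜ`.
Equicontinuity lets one replace `ψ(t + sₙ)` by its limit `ψ'(t)` in `f(t + sₙ, ψ(t + sₙ))`, so
`f(· + sₙ, ψ(· + sₙ)) → f'(·, ψ'(·))`, and symmetrically for the way back.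
-/

section Equicontinuity

variable {ι κ γ β α : Type*} [UniformSpace β] [UniformSpace α]

theorem UniformEquicontinuousOn.of_tendsto {F : ι → β → α} {G : κ → β → α} {S : Set β}
    (hF : UniformEquicontinuousOn F S) {l : Filter γ} [l.NeBot] {a : κ → γ → ι}
    (hG : ∀ j, ∀ x ∈ S, Tendsto (fun n => F (a j n) x) l (𝓝 (G j x))) :
    UniformEquicontinuousOn G S := by
  intro U hU
  obtain ⟨V, hV, hVclosed, hVU⟩ := mem_uniformity_isClosed hU
  filter_upwards [hF V hV, mem_inf_of_right (mem_principal_self _)]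
  rintro ⟨x, y⟩ hxy ⟨hxS, hyS⟩ j
  exact hVU <| hVclosed.mem_of_tendsto ((hG j x hxS).prodMk_nhds (hG j y hyS)) <|
    Eventually.of_forall fun n => hxy (a j n)

theorem UniformEquicontinuousOn.tendsto_apply_of_tendsto {F : ι → β → α} {S : Set β}
    (hF : UniformEquicontinuousOn F S) {l : Filter γ} {i : γ → ι} {x : γ → β} {x₀ : β} {y : α}
    (hx : Tendsto x l (𝓝 x₀)) (hxS : ∀ᶠ n in l, x n ∈ S) (hx₀ : x₀ ∈ S)
    (hy : Tendsto (fun n => F (i n) x₀) l (𝓝 y)) :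
    Tendsto (fun n => F (i n) (x n)) l (𝓝 y) := by
  have hpair : Tendsto (fun n => (x₀, x n)) l (𝓤 β ⊓ 𝓟 (S ×ˢ S)) :=
    tendsto_inf.2 ⟨Uniform.tendsto_nhds_right.1 hx,
      tendsto_principal.2 (hxS.mono fun _ hn => ⟨hx₀, hn⟩)⟩
  exact hy.congr_uniformity fun U hU => (hpair.eventually (hF U hU)).mono fun n hn => hn (i n)

end Equicontinuity

theorem Metric.uniformEquicontinuousOn_iff {ι β α : Type*} [PseudoMetricSpace β]
    [PseudoMetricSpace α] {F : ι → β → α} {S : Set β} :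
    UniformEquicontinuousOn F S ↔
      ∀ ε > 0, ∃ δ > 0, ∀ x ∈ S, ∀ y ∈ S, dist x y < δ → ∀ i, dist (F i x) (F i y) < ε := by
  rw [(uniformity_basis_dist.inf_principal _).uniformEquicontinuousOn_iff uniformity_basis_dist]
  simp only [Set.mem_inter_iff, Set.mem_ofPred_eq, Set.mem_prod]
  exact forall₂_congr fun ε _ => exists_congr fun δ => and_congr_right fun _ =>
    ⟨fun h x hx y hy hxy => h x y ⟨hxy, hx, hy⟩, fun h x y ⟨hxy, hx, hy⟩ => h x hx y hy hxy⟩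

theorem BddPC.superposition {p : ℕ} {ψ : ℝ → Fin p → ℂ} (hψ : BddPC p ψ)
    {f : ℝ → (Fin p → ℂ) → Fin p → ℂ} (hbdd : ∃ C : ℝ, ∀ (t : ℝ) (x : Fin p → ℂ), ‖f t x‖ ≤ C)
    (hcont : Continuous fun q : ℝ × (Fin p → ℂ) => f q.1 q.2) :
    BddPC p (fun t => f t (ψ t)) := by
  obtain ⟨-, hψcont, hψlim⟩ := hψ
  have hlim : ∀ (a : ℝ) (s : Set ℝ) (L : Fin p → ℂ), Tendsto ψ (𝓝[s] a) (𝓝 L) →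
      Tendsto (fun t => f t (ψ t)) (𝓝[s] a) (𝓝 (f a L)) := fun a s L hL =>
    (hcont.tendsto (a, L)).comp ((tendsto_id.mono_left nhdsWithin_le_nhds).prodMk_nhds hL)
  obtain ⟨C, hC⟩ := hbdd
  refine ⟨⟨C, fun t => hC t (ψ t)⟩, hcont.comp_continuousOn (continuousOn_id.prodMk hψcont),
    fun n => ?_⟩
  obtain ⟨⟨L, hL⟩, ⟨R, hR⟩⟩ := hψlim n
  exact ⟨⟨_, hlim _ _ L hL⟩, ⟨_, hlim _ _ R hR⟩⟩

/-- If `f : ℝ × ℂ^p → ℂ^p` is bounded, continuous, almost automorphic uniformly on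
compact subsets of `ℂ^p` and uniformly continuous on compact subsets of `ℂ^p`
uniformly in `t ∈ ℝ`, and `ψ` is `ℤ`-almost automorphic, then `t ↦ f (t, ψ t)` is
`ℤ`-almost automorphic. -/
theorem zAlmostAutomorphic_superposition {p : ℕ}
    (f : ℝ → (Fin p → ℂ) → Fin p → ℂ)
    (hbdd : ∃ C : ℝ, ∀ (t : ℝ) (x : Fin p → ℂ), ‖f t x‖ ≤ C)
    (hcont : Continuous fun q : ℝ × (Fin p → ℂ) => f q.1 q.2)
    (haa : AAUniformOnCompact p f)
    (huc : ∀ K : Set (Fin p → ℂ), IsCompact K → ∀ ε > (0 : ℝ), ∃ δ > (0 : ℝ),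
      ∀ t : ℝ, ∀ x ∈ K, ∀ y ∈ K, ‖x - y‖ < δ → ‖f t x - f t y‖ < ε)
    (ψ : ℝ → Fin p → ℂ) (hψ : ZAlmostAutomorphic p ψ) :
    ZAlmostAutomorphic p (fun t : ℝ => f t (ψ t)) := by
  obtain ⟨hψpc, hψaa⟩ := hψ
  refine ⟨hψpc.superposition hbdd hcont, fun s => ?_⟩
  obtain ⟨C, hC⟩ := hψpc.1
  set K : Set (Fin p → ℂ) := Metric.closedBall 0 C
  have hK : IsCompact K := isCompact_closedBall 0 C
  have hψK : ∀ t, ψ t ∈ K := fun t => mem_closedBall_zero_iff.2 (hC t)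
  obtain ⟨φ₁, ψ', hφ₁, hψψ', hψ'ψ⟩ := hψaa s
  obtain ⟨φ₂, f', hφ₂, hff', hf'f⟩ := haa K hK fun n => (s (φ₁ n) : ℝ)
  have hψ'K : ∀ t, ψ' t ∈ K := fun t =>
    hK.isClosed.mem_of_tendsto (hψψ' t) (.of_forall fun _ => hψK _)
  have hf : UniformEquicontinuousOn f K := Metric.uniformEquicontinuousOn_iff.2 fun ε hε => by
    obtain ⟨δ, hδ, hfδ⟩ := huc K hK ε hε
    exact ⟨δ, hδ, fun x hx y hy hxy t => by
      simpa only [dist_eq_norm] using hfδ t x hx y hy (by rwa [← dist_eq_norm])⟩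
  have hf' : UniformEquicontinuousOn f' K := hf.of_tendsto hff'
  refine ⟨φ₁ ∘ φ₂, fun t => f' t (ψ' t), hφ₁.comp hφ₂, fun t => ?_, fun t => ?_⟩
  · exact hf.tendsto_apply_of_tendsto ((hψψ' t).comp hφ₂.tendsto_atTop)
      (.of_forall fun _ => hψK _) (hψ'K t) (hff' t _ (hψ'K t))
  · exact hf'.tendsto_apply_of_tendsto ((hψ'ψ t).comp hφ₂.tendsto_atTop)
      (.of_forall fun _ => hψ'K _) (hψK t) (hf'f t _ (hψK t))
end

section
/- Let f : ℝ → ℂ^p be continuous and Z-almost automorphic. If f is uniformly continuous on ℝ, then f is almost automorphic (in Bochner's sense). -/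
open MeasureTheory Filter Topology

/-- A continuous, uniformly continuous `ℤ`-almost automorphic function is almost
automorphic in Bochner's sense. -/
theorem almostAutomorphic_of_zAlmostAutomorphic_uniformContinuous {p : ℕ}
    (f : ℝ → Fin p → ℂ) (hf : ZAlmostAutomorphic p f)
    (hc : Continuous f) (huc : UniformContinuous f) :
    AlmostAutomorphic p f := by
  obtain ⟨⟨hbd, _⟩, hZ⟩ := hf
  refine ⟨hbd, hc, fun s => ?_⟩
  -- fractional parts
  set r : ℕ → ℝ := fun n => Int.fract (s n) with hrdef
  have hr01 : ∀ n, r n ∈ Set.Icc (0:ℝ) 1 :=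
    fun n => ⟨Int.fract_nonneg _, (Int.fract_lt_one _).le⟩
  obtain ⟨rlim, _, φ₁, hφ₁, hconv⟩ := isCompact_Icc.tendsto_subseq hr01
  obtain ⟨φ₂, g, hφ₂, hgf, hfg⟩ := hZ (fun n => ⌊s (φ₁ n)⌋)
  have hrseq : Tendsto (fun n => r (φ₁ (φ₂ n))) atTop (𝓝 rlim) :=
    hconv.comp hφ₂.tendsto_atTop
  -- distance of fractional parts to rlim tends to 0
  have hdist0 : Tendsto (fun n => dist rlim (r (φ₁ (φ₂ n)))) atTop (𝓝 0) := by
    have := (tendsto_iff_dist_tendsto_zero.mp hrseq)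
    simpa [dist_comm] using this
  have hsplit : ∀ n : ℕ, s (φ₁ (φ₂ n)) = (⌊s (φ₁ (φ₂ n))⌋ : ℝ) + r (φ₁ (φ₂ n)) :=
    fun n => (Int.floor_add_fract _).symm
  -- uniform continuity of g (with non-strict ineq)
  have hguc : ∀ ε : ℝ, 0 < ε → ∃ δ : ℝ, 0 < δ ∧
      ∀ u v : ℝ, dist u v < δ → dist (g u) (g v) ≤ ε := by
    intro ε hε
    obtain ⟨δ, hδ, hδ'⟩ := Metric.uniformContinuous_iff.mp huc ε hε
    refine ⟨δ, hδ, fun u v huv => ?_⟩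
    have hlim : Tendsto (fun n => dist (f (u + (⌊s (φ₁ (φ₂ n))⌋ : ℝ)))
        (f (v + (⌊s (φ₁ (φ₂ n))⌋ : ℝ)))) atTop (𝓝 (dist (g u) (g v))) :=
      (hgf u).dist (hgf v)
    refine le_of_tendsto hlim (Filter.Eventually.of_forall fun n => ?_)
    exact (hδ' (by simpa [Real.dist_eq, add_sub_add_right_eq_sub] using huv)).le
  refine ⟨φ₁ ∘ φ₂, fun t => g (t + rlim), hφ₁.comp hφ₂, fun t => ?_, fun t => ?_⟩
  · -- f(t + s φn) → g(t + rlim)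
    have h1 : Tendsto (fun n => f (t + rlim + (⌊s (φ₁ (φ₂ n))⌋ : ℝ))) atTop
        (𝓝 (g (t + rlim))) := hgf (t + rlim)
    refine h1.congr_dist ?_
    have harg : Tendsto (fun n => dist (t + rlim + (⌊s (φ₁ (φ₂ n))⌋ : ℝ))
        (t + s (φ₁ (φ₂ n)))) atTop (𝓝 0) := by
      refine hdist0.congr fun n => ?_
      rw [Real.dist_eq, Real.dist_eq]
      congr 1
      linear_combination hsplit n
    have h2 : Tendsto (fun n => ((t + rlim + (⌊s (φ₁ (φ₂ n))⌋ : ℝ),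
        t + s (φ₁ (φ₂ n))) : ℝ × ℝ)) atTop (uniformity ℝ) :=
      tendsto_uniformity_iff_dist_tendsto_zero.mpr harg
    have h3 : Tendsto (fun n => (f (t + rlim + (⌊s (φ₁ (φ₂ n))⌋ : ℝ)),
        f (t + s (φ₁ (φ₂ n))))) atTop (uniformity (Fin p → ℂ)) :=
      Filter.Tendsto.comp huc h2
    have h4 := tendsto_uniformity_iff_dist_tendsto_zero.mp h3
    simpa [Function.comp_def] using h4
  · -- g(t - s φn + rlim) → f t
    have h1 : Tendsto (fun n => g (t - (⌊s (φ₁ (φ₂ n))⌋ : ℝ))) atTop (𝓝 (f t)) :=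
      hfg t
    refine h1.congr_dist ?_
    simp only [Function.comp_apply]
    rw [Metric.tendsto_atTop]
    intro ε hε
    obtain ⟨δ, hδ, hδ'⟩ := hguc (ε / 2) (by linarith)
    obtain ⟨N, hN⟩ := Metric.tendsto_atTop.mp hdist0 δ hδ
    refine ⟨N, fun n hn => ?_⟩
    have hd : dist (t - (⌊s (φ₁ (φ₂ n))⌋ : ℝ)) (t - s (φ₁ (φ₂ n)) + rlim) < δ := by
      have hthis := hN n hn
      rw [Real.dist_eq, sub_zero, Real.dist_eq, abs_abs] at hthis
      have key : (t - (⌊s (φ₁ (φ₂ n))⌋ : ℝ)) - (t - s (φ₁ (φ₂ n)) + rlim)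
          = (r (φ₁ (φ₂ n)) - rlim) := by linear_combination hsplit n
      rw [Real.dist_eq, key, abs_sub_comm]
      exact hthis
    have hle := hδ' _ _ hd
    rw [Real.dist_eq, sub_zero, abs_of_nonneg dist_nonneg]
    linarith
end

section
/- Let f : ℝ → ℂ^p be Z-almost automorphic and define F(t) = ∫₀ᵗ f(s) ds. Then F is bounded on ℝ if and only if F is almost automorphic (in Bochner's sense). -/
open MeasureTheory Filter Topology

/-!
Write `s n = m n + r n` with `m n = ⌊s n⌋` and `r n ∈ [0, 1)`. Along a subsequence `r n → ρ`,
`f (· + m n) → g` and `g (· - m n) → f` pointwise (`ℤ`-almost automorphy), and `F (s n) → a`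
(boundedness of `F`). Since `F (t + s n) = F (s n) + ∫ u in r n..t + r n, f (u + m n)`, dominated
convergence gives `F (t + s n) → G t := a + ∫ u in 0..t, g (u + ρ)`, and the same argument applied
to `G` gives `G (t - s n) → b + F t` along a further subsequence. Passing to these limits
alternately keeps the bound `‖F t + k • b‖ ≤ sup ‖F‖` for every `k : ℕ`, which forces `b = 0`.
-/

section Integral

variable {E : Type*} [NormedAddCommGroup E]

theorem intervalIntegrable_of_norm_le {f : ℝ → E} {C : ℝ}
    (hfm : AEStronglyMeasurable f volume) (hfC : ∀ t, ‖f t‖ ≤ C) (a b : ℝ) :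
    IntervalIntegrable f volume a b :=
  intervalIntegrable_const.mono_fun' hfm.restrict (.of_forall hfC)

variable [NormedSpace ℝ E]

theorem tendsto_intervalIntegral_zero_of_tendsto_of_norm_le {h : ℕ → ℝ → E} {C : ℝ}
    (hC : ∀ n t, ‖h n t‖ ≤ C) {a : ℕ → ℝ} {a₀ : ℝ} (ha : Tendsto a atTop (𝓝 a₀)) :
    Tendsto (fun n => ∫ u in a n..a₀, h n u) atTop (𝓝 0) := by
  refine squeeze_zero_norm
    (fun n => intervalIntegral.norm_integral_le_of_norm_le_const fun t _ => hC n t) ?_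
  simpa using ((tendsto_const_nhds (x := a₀)).sub ha).abs.const_mul C

theorem tendsto_intervalIntegral_of_norm_le_of_tendsto {h : ℕ → ℝ → E} {h₀ : ℝ → E} {C : ℝ}
    (hm : ∀ n, AEStronglyMeasurable (h n) volume) (hC : ∀ n t, ‖h n t‖ ≤ C)
    (hlim : ∀ t, Tendsto (fun n => h n t) atTop (𝓝 (h₀ t)))
    {a b : ℕ → ℝ} {a₀ b₀ : ℝ} (ha : Tendsto a atTop (𝓝 a₀)) (hb : Tendsto b atTop (𝓝 b₀)) :
    Tendsto (fun n => ∫ u in a n..b n, h n u) atTop (𝓝 (∫ u in a₀..b₀, h₀ u)) := by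
  have hint : ∀ n x y, IntervalIntegrable (h n) volume x y :=
    fun n => intervalIntegrable_of_norm_le (hm n) (hC n)
  have hsplit : ∀ n, ∫ u in a n..b n, h n u
      = (∫ u in a n..a₀, h n u) + (∫ u in a₀..b₀, h n u) - ∫ u in b n..b₀, h n u := fun n => by
    rw [sub_eq_add_neg, ← intervalIntegral.integral_symm,
      intervalIntegral.integral_add_adjacent_intervals (hint n _ _) (hint n _ _),
      intervalIntegral.integral_add_adjacent_intervals (hint n _ _) (hint n _ _)]
  have hmiddle : Tendsto (fun n => ∫ u in a₀..b₀, h n u) atTop (𝓝 (∫ u in a₀..b₀, h₀ u)) :=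
    intervalIntegral.tendsto_integral_filter_of_dominated_convergence (fun _ => C)
      (.of_forall fun n => (hm n).restrict) (.of_forall fun n => .of_forall fun t _ => hC n t)
      intervalIntegrable_const (.of_forall fun t _ => hlim t)
  simpa [hsplit] using
    ((tendsto_intervalIntegral_zero_of_tendsto_of_norm_le hC ha).add hmiddle).sub
      (tendsto_intervalIntegral_zero_of_tendsto_of_norm_le hC hb)

theorem tendsto_comp_add_of_eq_add_integral {f g F : ℝ → E} {C : ℝ}
    (hfm : AEStronglyMeasurable f volume) (hfC : ∀ t, ‖f t‖ ≤ C)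
    (hF : ∀ t, F t = F 0 + ∫ u in 0..t, f u)
    {m r : ℕ → ℝ} {ρ : ℝ} {a : E} (hr : Tendsto r atTop (𝓝 ρ))
    (hfg : ∀ t, Tendsto (fun n => f (t + m n)) atTop (𝓝 (g t)))
    (ha : Tendsto (fun n => F (m n + r n)) atTop (𝓝 a)) (t : ℝ) :
    Tendsto (fun n => F (t + (m n + r n))) atTop (𝓝 (a + ∫ u in 0..t, g (u + ρ))) := by
  have hint := intervalIntegrable_of_norm_le hfm hfC
  have hshift : ∀ n, ∫ u in r n..t + r n, f (u + m n) = F (t + (m n + r n)) - F (m n + r n) :=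
    fun n => by
      rw [intervalIntegral.integral_comp_add_right, hF (t + _), hF (_ + _), add_sub_add_left_eq_sub,
        intervalIntegral.integral_interval_sub_left (hint _ _) (hint _ _)]
      ring_nf
  have hlim := tendsto_intervalIntegral_of_norm_le_of_tendsto (h := fun n u => f (u + m n))
    (fun n => hfm.comp_measurePreserving (measurePreserving_add_right volume (m n)))
    (fun n u => hfC _) hfg hr (hr.const_add t)
  rw [intervalIntegral.integral_comp_add_right, zero_add]
  exact (ha.add hlim).congr fun n => by simp only [hshift]; abel

end Integral

theorem eq_zero_of_tendsto_comp_add_of_tendsto_comp_sub {α E : Type*} [AddGroup α]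
    [NormedAddCommGroup E] [NormedSpace ℝ E] {F G : α → E} {s : ℕ → α} {b : E} {M : ℝ}
    (hM : ∀ t, ‖F t‖ ≤ M) (hFG : ∀ t, Tendsto (fun n => F (t + s n)) atTop (𝓝 (G t)))
    (hGF : ∀ t, Tendsto (fun n => G (t - s n)) atTop (𝓝 (b + F t))) : b = 0 := by
  have hbound : ∀ k : ℕ, ∀ t, ‖F t + k • b‖ ≤ M := by
    intro k
    induction k with
    | zero => simpa using hM
    | succ k ih =>
      have hG : ∀ t, ‖G t + k • b‖ ≤ M := fun t =>
        le_of_tendsto' ((hFG t).add_const (k • b)).norm fun n => ih _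
      intro t
      have hlim := le_of_tendsto' ((hGF t).add_const (k • b)).norm fun n => hG _
      rwa [show b + F t + k • b = F t + (k + 1) • b by rw [succ_nsmul]; abel] at hlim
  by_contra hb
  have hbpos : 0 < ‖b‖ := norm_pos_iff.2 hb
  obtain ⟨k, hk⟩ := exists_nat_gt (2 * M / ‖b‖)
  have hk' : (k : ℝ) * ‖b‖ ≤ 2 * M :=
    calc (k : ℝ) * ‖b‖ = ‖(F 0 + k • b) - F 0‖ := by simp [RCLike.norm_nsmul ℝ]
      _ ≤ ‖F 0 + k • b‖ + ‖F 0‖ := norm_sub_le _ _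
      _ ≤ 2 * M := by linarith [hbound k 0, hM 0]
  rw [div_lt_iff₀ hbpos] at hk
  linarith

theorem ContinuousOn.aestronglyMeasurable_of_countable_compl {α β : Type*}
    [TopologicalSpace α] [MeasurableSpace α] [OpensMeasurableSpace α]
    [MeasurableSingletonClass α] {μ : Measure α} [NullSingletonClass μ]
    [TopologicalSpace β] [TopologicalSpace.PseudoMetrizableSpace β]
    [SecondCountableTopologyEither α β] {f : α → β} {s : Set α}
    (hf : ContinuousOn f s) (hs : sᶜ.Countable) : AEStronglyMeasurable f μ := by
  have hae : ∀ᵐ x ∂μ, x ∈ s := hs.measure_zero μ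
  simpa [Measure.restrict_eq_self_of_ae_mem hae] using
    hf.aestronglyMeasurable (μ := μ) hs.measurableSet.of_compl

theorem exists_strictMono_tendsto_of_norm_le {E : Type*} [NormedAddCommGroup E] [ProperSpace E]
    {x : ℕ → E} {M : ℝ} (hM : ∀ n, ‖x n‖ ≤ M) :
    ∃ a, ∃ φ : ℕ → ℕ, StrictMono φ ∧ Tendsto (x ∘ φ) atTop (𝓝 a) := by
  obtain ⟨a, -, φ, hφ, ha⟩ := tendsto_subseq_of_bounded (Metric.isBounded_closedBall (x := 0))
    fun n => mem_closedBall_zero_iff.2 (hM n)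
  exact ⟨a, φ, hφ, ha⟩

variable {p : ℕ} {f : ℝ → Fin p → ℂ}

theorem BddPC.aestronglyMeasurable (hf : BddPC p f) : AEStronglyMeasurable f volume :=
  hf.2.1.aestronglyMeasurable_of_countable_compl <| (Set.countable_range ((↑) : ℤ → ℝ)).mono
    fun t ht => by simpa [eq_comm] using ht

theorem ZAlmostAutomorphic.exists_subseq_floor_fract (hf : ZAlmostAutomorphic p f) (s : ℕ → ℝ) :
    ∃ φ : ℕ → ℕ, ∃ g : ℝ → Fin p → ℂ, ∃ ρ : ℝ, StrictMono φ ∧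
      Tendsto (fun n => Int.fract (s (φ n))) atTop (𝓝 ρ) ∧
      (∀ t, Tendsto (fun n => f (t + ⌊s (φ n)⌋)) atTop (𝓝 (g t))) ∧
      ∀ t, Tendsto (fun n => g (t - ⌊s (φ n)⌋)) atTop (𝓝 (f t)) := by
  obtain ⟨ρ, φ₁, hφ₁, hρ⟩ := exists_strictMono_tendsto_of_norm_le (x := fun n => Int.fract (s n))
    (M := 1) fun n => by
      rw [Real.norm_of_nonneg (Int.fract_nonneg _)]; exact (Int.fract_lt_one _).le
  obtain ⟨φ₂, g, hφ₂, hfg, hgf⟩ := hf.2 fun n => ⌊s (φ₁ n)⌋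
  exact ⟨φ₁ ∘ φ₂, g, ρ, hφ₁.comp hφ₂, hρ.comp hφ₂.tendsto_atTop, hfg, hgf⟩

theorem ZAlmostAutomorphic.exists_subseq_primitive (hf : ZAlmostAutomorphic p f)
    {F : ℝ → Fin p → ℂ} (hF : ∀ t, F t = ∫ u in (0 : ℝ)..t, f u) {M : ℝ}
    (hM : ∀ t, ‖F t‖ ≤ M) (s : ℕ → ℝ) :
    ∃ φ : ℕ → ℕ, ∃ G : ℝ → Fin p → ℂ, StrictMono φ ∧
      (∀ t, Tendsto (fun n => F (t + s (φ n))) atTop (𝓝 (G t))) ∧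
      ∀ t, Tendsto (fun n => G (t - s (φ n))) atTop (𝓝 (F t)) := by
  obtain ⟨C, hC⟩ := hf.1.1
  have hfm := hf.1.aestronglyMeasurable
  obtain ⟨φ₁, g, ρ, hφ₁, hρ, hfg, hgf⟩ := hf.exists_subseq_floor_fract s
  have hgC : ∀ t, ‖g t‖ ≤ C := fun t => le_of_tendsto' (hfg t).norm fun n => hC _
  have hgm : AEStronglyMeasurable g volume := aestronglyMeasurable_of_tendsto_ae atTop
    (fun n => hfm.comp_measurePreserving (measurePreserving_add_right volume _)) (.of_forall hfg)
  have hgρm : AEStronglyMeasurable (fun u => g (u + ρ)) volume :=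
    hgm.comp_measurePreserving (measurePreserving_add_right volume ρ)
  obtain ⟨a, φ₂, hφ₂, ha⟩ := exists_strictMono_tendsto_of_norm_le fun n => hM (s (φ₁ n))
  set G : ℝ → Fin p → ℂ := fun t => a + ∫ u in (0 : ℝ)..t, g (u + ρ)
  have hFG : ∀ t, Tendsto (fun n => F (t + s (φ₁ (φ₂ n)))) atTop (𝓝 (G t)) := fun t => by
    simpa only [Int.floor_add_fract] using tendsto_comp_add_of_eq_add_integral (F := F) hfm hC
      (fun t => by simp [hF])
      (r := fun n => Int.fract (s (φ₁ (φ₂ n)))) (hρ.comp hφ₂.tendsto_atTop)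
      (fun t => (hfg t).comp hφ₂.tendsto_atTop)
      (by simpa only [Int.floor_add_fract, Function.comp_def] using ha) t
  have hGM : ∀ t, ‖G t‖ ≤ M := fun t => le_of_tendsto' (hFG t).norm fun n => hM _
  obtain ⟨b, φ₃, hφ₃, hb⟩ := exists_strictMono_tendsto_of_norm_le fun n => hGM (-s (φ₁ (φ₂ n)))
  set ψ : ℕ → ℕ := fun n => φ₁ (φ₂ (φ₃ n))
  have hGF : ∀ t, Tendsto (fun n => G (t - s (ψ n))) atTop (𝓝 (b + F t)) := by
    intro t
    have hneg (x : ℝ) : -(⌊x⌋ : ℝ) + -Int.fract x = -x := by rw [← neg_add, Int.floor_add_fract]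
    have := tendsto_comp_add_of_eq_add_integral (F := G) hgρm (fun t => hgC _)
      (fun t => by simp [G])
      (m := fun n => -⌊s (ψ n)⌋) (r := fun n => -Int.fract (s (ψ n)))
      ((hρ.comp (hφ₂.comp hφ₃).tendsto_atTop).neg)
      (fun t => by simpa [← sub_eq_add_neg, sub_add_eq_add_sub, Function.comp_def] using
        (hgf (t + ρ)).comp (hφ₂.comp hφ₃).tendsto_atTop)
      (by simpa only [hneg, Function.comp_def] using hb) t
    simpa only [hneg, ← sub_eq_add_neg, sub_add_cancel, ← hF] using this
  have hb0 : b = 0 := eq_zero_of_tendsto_comp_add_of_tendsto_comp_sub hM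
    (fun t => (hFG t).comp hφ₃.tendsto_atTop) hGF
  exact ⟨ψ, G, hφ₁.comp (hφ₂.comp hφ₃), fun t => (hFG t).comp hφ₃.tendsto_atTop,
    by simpa [hb0] using hGF⟩

/-- For `f` `ℤ`-almost automorphic, the primitive `F(t) = ∫₀ᵗ f(s) ds` is bounded
if and only if it is almost automorphic in Bochner's sense. -/
theorem primitive_bounded_iff_almostAutomorphic {p : ℕ}
    (f : ℝ → Fin p → ℂ) (hf : ZAlmostAutomorphic p f)
    (F : ℝ → Fin p → ℂ) (hF : ∀ t : ℝ, F t = ∫ s in (0:ℝ)..t, f s) :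
    (∃ C : ℝ, ∀ t : ℝ, ‖F t‖ ≤ C) ↔ AlmostAutomorphic p F := by
  refine ⟨fun ⟨M, hM⟩ => ?_, fun hF_aa => hF_aa.1⟩
  obtain ⟨C, hC⟩ := hf.1.1
  have hfint := intervalIntegrable_of_norm_le hf.1.aestronglyMeasurable hC
  refine ⟨⟨M, hM⟩, ?_, hf.exists_subseq_primitive hF hM⟩
  exact (intervalIntegral.continuous_primitive hfint 0).congr fun t => (hF t).symm
end

section
/- Let Φ : ℝ → M_{p×p}(ℝ) be a matrix-valued function with ∫_ℝ ‖Φ(s)‖ ds < ∞. If f : ℝ → ℂ^p is Z-almost automorphic, then the function (Lf)(t) = ∫_{−∞}^{∞} Φ(t − s) f(s) ds is Z-almost automorphic. -/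
open MeasureTheory Filter Topology

/-- A pi-valued function is a.e. strongly measurable if each component is
a.e. measurable. -/
lemma ZAA.asm_pi {p : ℕ} {F : ℝ → Fin p → ℂ}
    (h : ∀ i, AEMeasurable (fun u => F u i) volume) : AEStronglyMeasurable F volume := by
  rw [aestronglyMeasurable_iff_aemeasurable]
  refine ⟨fun u i => (h i).mk _ u, measurable_pi_iff.2 fun i => (h i).measurable_mk, ?_⟩
  filter_upwards [ae_all_iff.2 fun i => (h i).ae_eq_mk] with u hu
  exact funext hu

/-- Norm bound for a matrix applied to a bounded vector. -/
lemma ZAA.apply_norm_le {p : ℕ} (M : Matrix (Fin p) (Fin p) ℝ) (v : Fin p → ℂ) {C : ℝ}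
    (hC : 0 ≤ C) (hv : ‖v‖ ≤ C) :
    ‖(fun i : Fin p => ∑ j : Fin p, ((M i j : ℝ) : ℂ) * v j)‖ ≤ (∑ i, ∑ j, |M i j|) * C := by
  have hW : (0:ℝ) ≤ (∑ i, ∑ j, |M i j|) * C := by positivity
  rw [pi_norm_le_iff_of_nonneg hW]
  intro i
  calc ‖∑ j, ((M i j : ℝ) : ℂ) * v j‖ ≤ ∑ j, ‖((M i j : ℝ) : ℂ) * v j‖ := norm_sum_le _ _
    _ ≤ ∑ j, |M i j| * C := by
        refine Finset.sum_le_sum fun j _ => ?_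
        rw [norm_mul, Complex.norm_real, Real.norm_eq_abs]
        exact mul_le_mul_of_nonneg_left ((norm_le_pi_norm v j).trans hv) (abs_nonneg _)
    _ = (∑ j, |M i j|) * C := by rw [Finset.sum_mul]
    _ ≤ (∑ i, ∑ j, |M i j|) * C := by
        refine mul_le_mul_of_nonneg_right ?_ hC
        exact Finset.single_le_sum (f := fun i : Fin p => ∑ j, |M i j|)
          (fun i _ => Finset.sum_nonneg fun j _ => abs_nonneg _) (Finset.mem_univ i)

/-- A.e. strong measurability of the integrand. -/
lemma ZAA.asm_integrand {p : ℕ} (Φ : ℝ → Matrix (Fin p) (Fin p) ℝ)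
    (hΦ : ∀ i j : Fin p, Integrable (fun s : ℝ => Φ s i j) volume)
    {h : ℝ → Fin p → ℂ} (hm : AEStronglyMeasurable h volume) (t : ℝ) :
    AEStronglyMeasurable
      (fun u : ℝ => (fun i : Fin p => ∑ j : Fin p, ((Φ u i j : ℝ) : ℂ) * h (t - u) j))
      volume := by
  have hcomp : AEStronglyMeasurable (fun u : ℝ => h (t - u)) volume :=
    hm.comp_quasiMeasurePreserving
      (Measure.measurePreserving_sub_left volume t).quasiMeasurePreserving
  refine ZAA.asm_pi fun i => ?_
  refine Finset.aemeasurable_fun_sum _ fun j _ => ?_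
  have h1 : AEMeasurable (fun u : ℝ => ((Φ u i j : ℝ) : ℂ)) volume :=
    (Complex.measurable_ofReal.comp_aemeasurable (hΦ i j).aemeasurable)
  have h2 : AEMeasurable (fun u : ℝ => h (t - u) j) volume :=
    ((continuous_apply j).comp_aestronglyMeasurable hcomp).aemeasurable
  exact h1.mul h2

/-- If `Φ : ℝ → M_{p×p}(ℝ)` is (entrywise) integrable on `ℝ`, i.e.
`∫_ℝ ‖Φ(s)‖ ds < ∞`, and `f` is `ℤ`-almost automorphic, then the convolution
`(Lf)(t) = ∫_{-∞}^{∞} Φ(t-s) f(s) ds` is `ℤ`-almost automorphic. -/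
theorem convolution_zAlmostAutomorphic {p : ℕ}
    (Φ : ℝ → Matrix (Fin p) (Fin p) ℝ)
    (hΦ : ∀ i j : Fin p, Integrable (fun s : ℝ => Φ s i j) volume)
    (f : ℝ → Fin p → ℂ) (hf : ZAlmostAutomorphic p f) :
    ZAlmostAutomorphic p
      (fun t : ℝ => ∫ s : ℝ, (fun i : Fin p => ∑ j : Fin p, ((Φ (t - s) i j : ℝ) : ℂ) * f s j)) := by
  classical
  obtain ⟨⟨⟨C₀, hC₀⟩, hcont, _⟩, haut⟩ := hf
  set C := max C₀ 0 with hCdef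
  have hC : ∀ t, ‖f t‖ ≤ C := fun t => (hC₀ t).trans (le_max_left _ _)
  have hC0 : (0:ℝ) ≤ C := le_max_right _ _
  -- the set of non-integers is open
  have hSeq : {t : ℝ | ∀ n : ℤ, t ≠ (n : ℝ)} = (Set.range ((↑) : ℤ → ℝ))ᶜ := by
    ext t
    simp only [Set.mem_setOf_eq, Set.mem_compl_iff, Set.mem_range, not_exists]
    exact ⟨fun h n hn => h n hn.symm, fun h n hn => h n hn.symm⟩
  have hSopen : IsOpen {t : ℝ | ∀ n : ℤ, t ≠ (n : ℝ)} := by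
    rw [hSeq]; exact Int.isClosedEmbedding_coe_real.isClosed_range.isOpen_compl
  -- f is a.e. strongly measurable
  have hfm : AEStronglyMeasurable f volume := by
    have h1 : AEStronglyMeasurable f (volume.restrict {t : ℝ | ∀ n : ℤ, t ≠ (n : ℝ)}) :=
      hcont.aestronglyMeasurable hSopen.measurableSet
    have h2 : ∀ᵐ x : ℝ ∂volume, x ∈ {t : ℝ | ∀ n : ℤ, t ≠ (n : ℝ)} := by
      rw [ae_iff]
      refine measure_mono_null (fun x hx => ?_) ((Set.countable_range ((↑) : ℤ → ℝ)).measure_zero volume)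
      simp only [Set.mem_setOf_eq, not_forall, not_not] at hx
      obtain ⟨n, hn⟩ := hx
      exact ⟨n, hn.symm⟩
    rwa [Measure.restrict_eq_self_of_ae_mem h2] at h1
  -- the dominating function
  set W : ℝ → ℝ := fun u => (∑ i, ∑ j, |Φ u i j|) * C with hWdef
  have hW : Integrable W volume := by
    refine Integrable.mul_const ?_ C
    exact integrable_finset_sum _ fun i _ => integrable_finset_sum _ fun j _ => (hΦ i j).abs
  -- the shifted integrand
  set k : ℝ → ℝ → Fin p → ℂ :=
    fun t u => fun i : Fin p => ∑ j : Fin p, ((Φ u i j : ℝ) : ℂ) * f (t - u) j with hkdef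
  -- rewrite the convolution via translation invariance
  have key : (fun t : ℝ => ∫ s : ℝ,
      (fun i : Fin p => ∑ j : Fin p, ((Φ (t - s) i j : ℝ) : ℂ) * f s j))
      = fun t : ℝ => ∫ u : ℝ, k t u := by
    funext t
    rw [← integral_sub_left_eq_self (k t) volume t]
    congr 1
    funext s
    simp only [hkdef, sub_sub_cancel]
  rw [key]
  -- continuity of the convolution
  have hcontF : Continuous fun t : ℝ => ∫ u : ℝ, k t u := by
    rw [continuous_iff_continuousAt]
    intro t₀
    refine continuousAt_of_dominated
      (Filter.Eventually.of_forall fun t => ZAA.asm_integrand Φ hΦ hfm t)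
      (Filter.Eventually.of_forall fun t => Filter.Eventually.of_forall fun u =>
        ZAA.apply_norm_le (Φ u) (f (t - u)) hC0 (hC _)) hW ?_
    have hnull : volume (Set.range fun n : ℤ => t₀ - (n : ℝ)) = 0 :=
      (Set.countable_range _).measure_zero volume
    rw [ae_iff]
    refine measure_mono_null (fun u hu => ?_) hnull
    simp only [Set.mem_setOf_eq] at hu
    by_contra hmem
    apply hu
    simp only [Set.mem_range, not_exists] at hmem
    -- t₀ - u is not an integer, so f is continuous at t₀ - u
    have hmem' : t₀ - u ∈ {t : ℝ | ∀ n : ℤ, t ≠ (n : ℝ)} := by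
      intro n hn
      exact hmem n (by linarith [hn])
    have hfc : ContinuousAt f (t₀ - u) := hcont.continuousAt (hSopen.mem_nhds hmem')
    have hfc2 : ContinuousAt (fun t : ℝ => f (t - u)) t₀ :=
      ContinuousAt.comp hfc ((continuous_sub_right u).continuousAt)
    have hA : Continuous fun v : Fin p → ℂ =>
        (fun i : Fin p => ∑ j : Fin p, ((Φ u i j : ℝ) : ℂ) * v j) :=
      continuous_pi fun i => continuous_finset_sum _ fun j _ =>
        continuous_const.mul (continuous_apply j)
    exact (hA.continuousAt).comp hfc2
  -- boundedness of the convolution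
  have hbddF : ∀ t : ℝ, ‖∫ u : ℝ, k t u‖ ≤ ∫ u : ℝ, W u :=
    fun t => norm_integral_le_of_norm_le hW
      (Filter.Eventually.of_forall fun u => ZAA.apply_norm_le (Φ u) (f (t - u)) hC0 (hC _))
  refine ⟨⟨⟨∫ u : ℝ, W u, hbddF⟩, hcontF.continuousOn, fun n => ?_⟩, ?_⟩
  · exact ⟨⟨_, (hcontF.tendsto _).mono_left nhdsWithin_le_nhds⟩,
      ⟨_, (hcontF.tendsto _).mono_left nhdsWithin_le_nhds⟩⟩
  -- the almost automorphy property
  intro s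
  obtain ⟨φ, g, hφ, hg1, hg2⟩ := haut s
  -- g is bounded by C
  have hgC : ∀ t, ‖g t‖ ≤ C := fun t =>
    le_of_tendsto ((hg1 t).norm) (Filter.Eventually.of_forall fun n => hC _)
  -- g is a.e. strongly measurable
  have hgm : AEStronglyMeasurable g volume := by
    refine aestronglyMeasurable_of_tendsto_ae (f := fun n : ℕ => fun t : ℝ => f (t + (s (φ n) : ℝ)))
      atTop (fun n => ?_) (Filter.Eventually.of_forall fun t => hg1 t)
    exact hfm.comp_quasiMeasurePreserving
      (measurePreserving_add_right volume ((s (φ n) : ℝ))).quasiMeasurePreserving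
  -- the limit convolution
  refine ⟨φ, fun t : ℝ => ∫ u : ℝ,
    (fun i : Fin p => ∑ j : Fin p, ((Φ u i j : ℝ) : ℂ) * g (t - u) j), hφ, ?_, ?_⟩
  · -- forward direction
    intro t
    refine tendsto_integral_of_dominated_convergence W
      (fun n => ZAA.asm_integrand Φ hΦ hfm (t + (s (φ n) : ℝ)))
      hW
      (fun n => Filter.Eventually.of_forall fun u =>
        ZAA.apply_norm_le (Φ u) (f (t + (s (φ n) : ℝ) - u)) hC0 (hC _))
      (Filter.Eventually.of_forall fun u => ?_)
    have hA : Continuous fun v : Fin p → ℂ =>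
        (fun i : Fin p => ∑ j : Fin p, ((Φ u i j : ℝ) : ℂ) * v j) :=
      continuous_pi fun i => continuous_finset_sum _ fun j _ =>
        continuous_const.mul (continuous_apply j)
    have h1 : Tendsto (fun n : ℕ => f (t + (s (φ n) : ℝ) - u)) atTop (𝓝 (g (t - u))) := by
      have := hg1 (t - u)
      convert this using 2 with n
      ring_nf
    exact (hA.continuousAt.tendsto).comp h1
  · -- backward direction
    intro t
    refine tendsto_integral_of_dominated_convergence W
      (fun n => ZAA.asm_integrand Φ hΦ hgm (t - (s (φ n) : ℝ)))
      hW
      (fun n => Filter.Eventually.of_forall fun u =>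
        ZAA.apply_norm_le (Φ u) (g (t - (s (φ n) : ℝ) - u)) hC0 (hgC _))
      (Filter.Eventually.of_forall fun u => ?_)
    have hA : Continuous fun v : Fin p → ℂ =>
        (fun i : Fin p => ∑ j : Fin p, ((Φ u i j : ℝ) : ℂ) * v j) :=
      continuous_pi fun i => continuous_finset_sum _ fun j _ =>
        continuous_const.mul (continuous_apply j)
    have h1 : Tendsto (fun n : ℕ => g (t - (s (φ n) : ℝ) - u)) atTop (𝓝 (f (t - u))) := by
      have := hg2 (t - u)
      convert this using 2 with n
      ring_nf
    exact (hA.continuousAt.tendsto).comp h1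
end

section
/- Let α ∈ ℂ with Re(α) < 0 and let f : ℝ → ℂ be Z-almost automorphic. Then x₁(t) = ∫_{−∞}^{t} e^{α(t−s)} f(s) ds is well defined and is the unique almost automorphic solution of the scalar equation x'(t) = α x(t) + f(t), i.e. the unique almost automorphic function x satisfying x(t) = x(s) + ∫_s^t (α x(u) + f(u)) du for all s ≤ t. -/
open MeasureTheory Filter Topology

/-- Bounded, piecewise continuous scalar function: continuous on ℝ ∖ ℤ with finite
one-sided limits at every integer. -/
def BddPCc (f : ℝ → ℂ) : Prop :=
  (∃ C : ℝ, ∀ t : ℝ, ‖f t‖ ≤ C) ∧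
  ContinuousOn f {t : ℝ | ∀ n : ℤ, t ≠ (n : ℝ)} ∧
  ∀ n : ℤ, (∃ L : ℂ, Tendsto f (𝓝[<] (n : ℝ)) (𝓝 L)) ∧
           (∃ R : ℂ, Tendsto f (𝓝[>] (n : ℝ)) (𝓝 R))

/-- `ℤ`-almost automorphic scalar functions. -/
def ZAlmostAutomorphicC (f : ℝ → ℂ) : Prop :=
  BddPCc f ∧
  ∀ s : ℕ → ℤ, ∃ (φ : ℕ → ℕ) (g : ℝ → ℂ), StrictMono φ ∧
    (∀ t : ℝ, Tendsto (fun n => f (t + (s (φ n) : ℝ))) atTop (𝓝 (g t))) ∧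
    (∀ t : ℝ, Tendsto (fun n => g (t - (s (φ n) : ℝ))) atTop (𝓝 (f t)))

/-- Almost automorphic scalar functions in the sense of Bochner. -/
def AlmostAutomorphicC (f : ℝ → ℂ) : Prop :=
  (∃ C : ℝ, ∀ t : ℝ, ‖f t‖ ≤ C) ∧ Continuous f ∧
  ∀ s : ℕ → ℝ, ∃ (φ : ℕ → ℕ) (g : ℝ → ℂ), StrictMono φ ∧
    (∀ t : ℝ, Tendsto (fun n => f (t + s (φ n))) atTop (𝓝 (g t))) ∧
    (∀ t : ℝ, Tendsto (fun n => g (t - s (φ n))) atTop (𝓝 (f t)))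

/-!
Since `Re α < 0`, the kernel `e^{α(t-s)}` is integrable on `(-∞, t]`, so for bounded measurable `h`
the convolution `expConv α h` is bounded by `C / -Re α` and Lipschitz with a constant depending only
on `C` and `α`. Let `x = expConv α f`. Given `sₙ`, write `sₙ = mₙ + qₙ` with `mₙ ∈ ℤ`,
`qₙ ∈ [0, 1)` and pass to a subsequence along which `qₙ → r` and `f (· + mₙ) → g`. Then
`x (t + sₙ) = expConv α (f (· + mₙ)) (t + qₙ) → expConv α g (t + r)` by dominated convergence and
the uniform Lipschitz bound, and symmetrically back. Off the integers `f` is continuous, so `x` is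
differentiable there with `x' = α x + f`, and a countable exceptional set does not spoil the
fundamental theorem of calculus. The difference `z` of two bounded solutions satisfies `z' = α z`,
so `z t = e^{α d} z (t - d)` tends to `0` as `d → ∞`.
-/

open Set

lemma norm_cexp_mul_ofReal (α : ℂ) (r : ℝ) :
    ‖Complex.exp (α * r)‖ = Real.exp (α.re * r) := by
  simp [Complex.norm_exp, Complex.mul_re]

lemma hasDerivAt_cexp_mul_ofReal (α : ℂ) (t : ℝ) :
    HasDerivAt (fun s : ℝ => Complex.exp (α * s)) (α * Complex.exp (α * t)) t := by
  simpa [mul_comm] using ((hasDerivAt_id (t : ℂ)).const_mul α).cexp.comp_ofReal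

lemma norm_cexp_mul_ofReal_sub_one_le {α : ℂ} (hα : α.re ≤ 0) {d : ℝ} (hd : 0 ≤ d) :
    ‖Complex.exp (α * d) - 1‖ ≤ ‖α‖ * d := by
  have key := Convex.norm_image_sub_le_of_norm_hasDerivWithin_le
    (fun x _ => (hasDerivAt_cexp_mul_ofReal α x).hasDerivWithinAt)
    (fun x hx => by
      rw [norm_mul, norm_cexp_mul_ofReal]
      exact mul_le_of_le_one_right (norm_nonneg α)
        (Real.exp_le_one_iff.2 (mul_nonpos_of_nonpos_of_nonneg hα hx.1)))
    (convex_Icc 0 d) (left_mem_Icc.2 hd) (right_mem_Icc.2 hd)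
  simpa [Real.norm_of_nonneg hd] using key

lemma Real.exp_mul_sub (a t s : ℝ) :
    Real.exp (a * (t - s)) = Real.exp (a * t) * Real.exp (-a * s) := by
  rw [← Real.exp_add]
  ring_nf

lemma integrableOn_exp_mul_sub_Iic {a : ℝ} (ha : a < 0) (t : ℝ) :
    IntegrableOn (fun s => Real.exp (a * (t - s))) (Iic t) := by
  simp_rw [Real.exp_mul_sub a t]
  exact (integrableOn_exp_mul_Iic (neg_pos.2 ha) t).const_mul _

lemma integral_exp_mul_sub_Iic {a : ℝ} (ha : a < 0) (t : ℝ) :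
    ∫ s in Iic t, Real.exp (a * (t - s)) = -a⁻¹ := by
  simp_rw [Real.exp_mul_sub a t]
  rw [integral_const_mul, integral_exp_mul_Iic (neg_pos.2 ha), mul_div_assoc', ← Real.exp_add]
  field_simp
  simp

lemma tendsto_apply_of_lipschitzWith {ι X Y : Type*} [PseudoMetricSpace X]
    [PseudoMetricSpace Y] {l : Filter ι} {F : ι → X → Y} {K : NNReal}
    (hF : ∀ i, LipschitzWith K (F i)) {x : X} {y : Y} (hFx : Tendsto (fun i => F i x) l (𝓝 y))
    {t : ι → X} (ht : Tendsto t l (𝓝 x)) : Tendsto (fun i => F i (t i)) l (𝓝 y) := by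
  rw [tendsto_iff_dist_tendsto_zero] at hFx ht ⊢
  refine squeeze_zero (fun _ => dist_nonneg) (fun i => ?_)
    (by simpa using (ht.const_mul (K : ℝ)).add hFx)
  calc dist (F i (t i)) y ≤ dist (F i (t i)) (F i x) + dist (F i x) y := dist_triangle _ _ _
    _ ≤ K * dist (t i) x + dist (F i x) y := by gcongr; exact (hF i).dist_le_mul _ _

lemma MeasureTheory.AEStronglyMeasurable.comp_add_right {h : ℝ → ℂ}
    (hm : AEStronglyMeasurable h volume) (c : ℝ) :
    AEStronglyMeasurable (fun u => h (u + c)) volume :=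
  hm.comp_quasiMeasurePreserving (measurePreserving_add_right volume c).quasiMeasurePreserving

lemma intervalIntegrable_of_norm_le_s11 {h : ℝ → ℂ} {C : ℝ} (hm : AEStronglyMeasurable h volume)
    (hC : ∀ u, ‖h u‖ ≤ C) (a b : ℝ) : IntervalIntegrable h volume a b :=
  intervalIntegrable_const.mono_fun' hm.restrict (ae_of_all _ hC)

lemma hasDerivAt_of_eq_add_integral {y g : ℝ → ℂ} (hg : Continuous g)
    (hy : ∀ s t, s ≤ t → y t = y s + ∫ u in s..t, g u) (t : ℝ) : HasDerivAt y (g t) t := by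
  refine ((intervalIntegral.integral_hasDerivAt_right (hg.intervalIntegrable (t - 1) t)
    hg.aestronglyMeasurable.stronglyMeasurableAtFilter hg.continuousAt).const_add
    (y (t - 1))).congr_of_eventuallyEq ?_
  filter_upwards [Ioi_mem_nhds (sub_one_lt t)] with v hv
  exact hy _ _ hv.le

lemma eq_zero_of_hasDerivAt_mul_of_bounded {α : ℂ} (hα : α.re < 0) {z : ℝ → ℂ} {B : ℝ}
    (hz : ∀ t, HasDerivAt z (α * z t) t) (hB : ∀ t, ‖z t‖ ≤ B) : z = 0 := by
  have hconst : ∀ s t : ℝ, Complex.exp (-α * t) * z t = Complex.exp (-α * s) * z s := by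
    have hd : ∀ t, HasDerivAt (fun t : ℝ => Complex.exp (-α * t) * z t) 0 t := fun t =>
      ((hasDerivAt_cexp_mul_ofReal (-α) t).mul (hz t)).congr_deriv (by ring)
    exact fun s t => is_const_of_deriv_eq_zero (fun t => (hd t).differentiableAt)
      (fun t => (hd t).deriv) t s
  funext t
  have hdecay : ∀ d : ℝ, ‖z t‖ ≤ Real.exp (α.re * d) * B := fun d => by
    have : z t = Complex.exp (α * d) * z (t - d) := by
      rw [← mul_right_inj' (Complex.exp_ne_zero (-α * t)), hconst (t - d) t, ← mul_assoc,
        ← Complex.exp_add]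
      push_cast
      ring_nf
    rw [this, norm_mul, norm_cexp_mul_ofReal]
    exact mul_le_mul_of_nonneg_left (hB _) (Real.exp_nonneg _)
  have hlim : Tendsto (fun d : ℝ => Real.exp (α.re * d) * B) atTop (𝓝 0) := by
    simpa using (Real.tendsto_exp_atBot.comp (tendsto_id.const_mul_atTop_of_neg hα)).mul_const B
  exact norm_le_zero_iff.1 (ge_of_tendsto' hlim hdecay)

lemma eq_of_bounded_of_eq_add_integral {α : ℂ} (hα : α.re < 0) {f y₁ y₂ : ℝ → ℂ}
    (hf : ∀ a b, IntervalIntegrable f volume a b) (hc₁ : Continuous y₁) (hc₂ : Continuous y₂)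
    {B₁ B₂ : ℝ} (hB₁ : ∀ t, ‖y₁ t‖ ≤ B₁) (hB₂ : ∀ t, ‖y₂ t‖ ≤ B₂)
    (hy₁ : ∀ s t, s ≤ t → y₁ t = y₁ s + ∫ u in s..t, (α * y₁ u + f u))
    (hy₂ : ∀ s t, s ≤ t → y₂ t = y₂ s + ∫ u in s..t, (α * y₂ u + f u)) : y₁ = y₂ := by
  have hz : ∀ s t, s ≤ t → (y₁ - y₂) t = (y₁ - y₂) s + ∫ u in s..t, α * (y₁ - y₂) u := by
    intro s t hst
    have hi₁ : IntervalIntegrable (fun u => α * y₁ u + f u) volume s t :=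
      ((continuous_const.mul hc₁).intervalIntegrable s t).add (hf s t)
    have hi₂ : IntervalIntegrable (fun u => α * y₂ u + f u) volume s t :=
      ((continuous_const.mul hc₂).intervalIntegrable s t).add (hf s t)
    rw [Pi.sub_apply, Pi.sub_apply, hy₁ s t hst, hy₂ s t hst, add_sub_add_comm,
      ← intervalIntegral.integral_sub hi₁ hi₂]
    simp only [Pi.sub_apply, mul_sub, add_sub_add_right_eq_sub]
  exact sub_eq_zero.1 (eq_zero_of_hasDerivAt_mul_of_bounded hα
    (hasDerivAt_of_eq_add_integral (continuous_const.mul (hc₁.sub hc₂)) hz)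
    fun t => (norm_sub_le _ _).trans (add_le_add (hB₁ t) (hB₂ t)))

noncomputable def expConv (α : ℂ) (h : ℝ → ℂ) (t : ℝ) : ℂ :=
  ∫ s in Iic t, Complex.exp (α * (t - s)) * h s

lemma expConv_comp_add_right (α : ℂ) (h : ℝ → ℂ) (t m : ℝ) :
    expConv α (fun s => h (s + m)) t = expConv α h (t + m) := by
  have key := (measurePreserving_add_right volume m).setIntegral_preimage_emb
    (measurableEmbedding_addRight m)
    (fun u : ℝ => Complex.exp (α * ((t + m : ℝ) - u)) * h u) (Iic (t + m))
  rw [expConv, expConv, ← key, show (· + m) ⁻¹' Iic (t + m) = Iic t by ext; simp]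
  refine setIntegral_congr_fun measurableSet_Iic fun s _ => ?_
  push_cast
  ring_nf

section ExpConv

variable {α : ℂ} {h : ℝ → ℂ} {C : ℝ}

lemma norm_cexp_mul_sub_mul_le (hC : ∀ u, ‖h u‖ ≤ C) (t s : ℝ) :
    ‖Complex.exp (α * (t - s)) * h s‖ ≤ C * Real.exp (α.re * (t - s)) := by
  rw [norm_mul, ← Complex.ofReal_sub, norm_cexp_mul_ofReal, mul_comm C]
  exact mul_le_mul_of_nonneg_left (hC s) (Real.exp_nonneg _)

variable (hα : α.re < 0) (hm : AEStronglyMeasurable h volume) (hC : ∀ u, ‖h u‖ ≤ C)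
include hα hm hC

lemma integrableOn_expConv_integrand (t : ℝ) :
    IntegrableOn (fun s : ℝ => Complex.exp (α * (t - s)) * h s) (Iic t) :=
  ((integrableOn_exp_mul_sub_Iic hα t).const_mul C).mono'
    ((by fun_prop : Continuous fun s : ℝ => Complex.exp (α * (t - s))).aestronglyMeasurable.mul
      hm).restrict
    (ae_of_all _ (norm_cexp_mul_sub_mul_le hC t))

omit hm in
lemma norm_expConv_le (t : ℝ) : ‖expConv α h t‖ ≤ C / -α.re := by
  refine (norm_integral_le_of_norm_le ((integrableOn_exp_mul_sub_Iic hα t).const_mul C)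
    (ae_of_all _ (norm_cexp_mul_sub_mul_le hC t))).trans_eq ?_
  rw [MeasureTheory.integral_const_mul, integral_exp_mul_sub_Iic hα, div_eq_mul_inv, inv_neg]

lemma expConv_eq_cexp_mul_add {s t : ℝ} (hst : s ≤ t) :
    expConv α h t = Complex.exp (α * (t - s)) * expConv α h s +
      ∫ u in Ioc s t, Complex.exp (α * (t - u)) * h u := by
  have hint := integrableOn_expConv_integrand hα hm hC t
  rw [expConv, ← Iic_union_Ioc_eq_Iic hst, setIntegral_union (Iic_disjoint_Ioc le_rfl)
    measurableSet_Ioc (hint.mono_set (Iic_subset_Iic.2 hst)) (hint.mono_set Ioc_subset_Iic_self),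
    expConv, ← MeasureTheory.integral_const_mul]
  congr 1
  refine setIntegral_congr_fun measurableSet_Iic fun u _ => ?_
  rw [← mul_assoc, ← Complex.exp_add]
  ring_nf

lemma norm_expConv_sub_le {s t : ℝ} (hst : s ≤ t) :
    ‖expConv α h t - expConv α h s‖ ≤ (‖α‖ * (C / -α.re) + C) * (t - s) := by
  have hd : 0 ≤ t - s := sub_nonneg.2 hst
  have hC0 : 0 ≤ C := (norm_nonneg _).trans (hC 0)
  have hjump : ‖Complex.exp (α * (t - s)) - 1‖ ≤ ‖α‖ * (t - s) := by
    simpa using norm_cexp_mul_ofReal_sub_one_le hα.le hd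
  have hIoc : ‖∫ u in Ioc s t, Complex.exp (α * (t - u)) * h u‖ ≤ C * (t - s) := by
    refine (norm_setIntegral_le_of_norm_le_const measure_Ioc_lt_top fun u hu => ?_).trans_eq
      (by rw [Real.volume_real_Ioc_of_le hst])
    refine (norm_cexp_mul_sub_mul_le hC t u).trans (mul_le_of_le_one_right hC0 ?_)
    exact Real.exp_le_one_iff.2 (mul_nonpos_of_nonpos_of_nonneg hα.le (by linarith [hu.2]))
  calc ‖expConv α h t - expConv α h s‖
      = ‖(Complex.exp (α * (t - s)) - 1) * expConv α h s +
          ∫ u in Ioc s t, Complex.exp (α * (t - u)) * h u‖ := by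
        rw [expConv_eq_cexp_mul_add hα hm hC hst]; ring_nf
    _ ≤ ‖α‖ * (t - s) * (C / -α.re) + C * (t - s) := by
        refine (norm_add_le _ _).trans (add_le_add ?_ hIoc)
        rw [norm_mul]
        exact mul_le_mul hjump (norm_expConv_le hα hC s) (norm_nonneg _) (by positivity)
    _ = (‖α‖ * (C / -α.re) + C) * (t - s) := by ring

lemma lipschitzWith_expConv :
    LipschitzWith (‖α‖ * (C / -α.re) + C).toNNReal (expConv α h) := by
  refine LipschitzWith.of_dist_le_mul fun x y => ?_
  have hC0 : 0 ≤ C := (norm_nonneg _).trans (hC 0)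
  rw [Real.coe_toNNReal _ (by have := neg_pos.2 hα; positivity), dist_eq_norm, Real.dist_eq]
  rcases le_total y x with hyx | hxy
  · rw [abs_of_nonneg (sub_nonneg.2 hyx)]
    exact norm_expConv_sub_le hα hm hC hyx
  · rw [abs_of_nonpos (sub_nonpos.2 hxy), norm_sub_rev, neg_sub]
    exact norm_expConv_sub_le hα hm hC hxy

lemma hasDerivAt_expConv {u : ℝ} (hu : ContinuousAt h u) :
    HasDerivAt (expConv α h) (α * expConv α h u + h u) u := by
  set w : ℝ → ℂ := fun r => Complex.exp (-α * r) * h r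
  have hwm : AEStronglyMeasurable w volume :=
    (by fun_prop : Continuous fun r : ℝ => Complex.exp (-α * r)).aestronglyMeasurable.mul hm
  have hw : ∀ v, IntegrableOn w (Iic v) := fun v => by
    refine ((integrableOn_exp_mul_Iic (neg_pos.2 hα) v).const_mul C).mono' hwm.restrict
      (ae_of_all _ fun r => ?_)
    rw [norm_mul, norm_cexp_mul_ofReal, Complex.neg_re, mul_comm C]
    exact mul_le_mul_of_nonneg_left (hC r) (Real.exp_nonneg _)
  have hx : expConv α h = fun v : ℝ =>
      Complex.exp (α * v) * ((∫ r in Iic 0, w r) + ∫ r in 0..v, w r) := by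
    funext v
    rw [← intervalIntegral.integral_Iic_sub_Iic (hw 0) (hw v), add_sub_cancel, expConv,
      ← MeasureTheory.integral_const_mul]
    refine setIntegral_congr_fun measurableSet_Iic fun r _ => ?_
    simp only [w, ← mul_assoc, ← Complex.exp_add]
    ring_nf
  have hF : HasDerivAt (fun v => ∫ r in (0 : ℝ)..v, w r) (w u) u :=
    intervalIntegral.integral_hasDerivAt_right
      ((hw (max 0 u)).mono_set Icc_subset_Iic_self).intervalIntegrable
      hwm.stronglyMeasurableAtFilter (by fun_prop)
  rw [hx]
  refine ((hasDerivAt_cexp_mul_ofReal α u).mul (hF.const_add _)).congr_deriv ?_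
  have : Complex.exp (α * u) * w u = h u := by
    simp only [w, ← mul_assoc, ← Complex.exp_add, neg_mul, add_neg_cancel, Complex.exp_zero,
      one_mul]
  rw [← this]
  ring

lemma expConv_eq_add_integral {S : Set ℝ} (hS : S.Countable) (hcont : ∀ u ∉ S, ContinuousAt h u)
    {s t : ℝ} (hst : s ≤ t) :
    expConv α h t = expConv α h s + ∫ u in s..t, (α * expConv α h u + h u) := by
  have hx := (lipschitzWith_expConv hα hm hC).continuous
  rw [integral_eq_of_hasDerivAt_off_countable_of_le _ _ hst hS hx.continuousOn
    (fun u hu => hasDerivAt_expConv hα hm hC (hcont u hu.2))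
    (((continuous_const.mul hx).intervalIntegrable s t).add
      (intervalIntegrable_of_norm_le_s11 hm hC s t))]
  ring

end ExpConv

lemma tendsto_expConv {α : ℂ} (hα : α.re < 0) {C : ℝ} {hs : ℕ → ℝ → ℂ} {h : ℝ → ℂ}
    (hm : ∀ n, AEStronglyMeasurable (hs n) volume) (hC : ∀ n u, ‖hs n u‖ ≤ C)
    (hlim : ∀ u, Tendsto (fun n => hs n u) atTop (𝓝 (h u)))
    {t : ℕ → ℝ} {t₀ : ℝ} (ht : Tendsto t atTop (𝓝 t₀)) :
    Tendsto (fun n => expConv α (hs n) (t n)) atTop (𝓝 (expConv α h t₀)) := by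
  refine tendsto_apply_of_lipschitzWith (fun n => lipschitzWith_expConv hα (hm n) (hC n)) ?_ ht
  exact tendsto_integral_of_dominated_convergence _
    (fun n => ((by fun_prop : Continuous fun s : ℝ => Complex.exp (α * (t₀ - s))
      ).aestronglyMeasurable.mul (hm n)).restrict)
    ((integrableOn_exp_mul_sub_Iic hα t₀).const_mul C)
    (fun n => ae_of_all _ (norm_cexp_mul_sub_mul_le (hC n) t₀))
    (ae_of_all _ fun s => tendsto_const_nhds.mul (hlim s))

lemma setOf_forall_ne_intCast : {t : ℝ | ∀ n : ℤ, t ≠ n} = (range ((↑) : ℤ → ℝ))ᶜ := by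
  ext t
  simp [eq_comm]

lemma isOpen_setOf_forall_ne_intCast : IsOpen {t : ℝ | ∀ n : ℤ, t ≠ n} := by
  rw [setOf_forall_ne_intCast]
  exact Int.isClosedEmbedding_coe_real.isClosed_range.isOpen_compl

namespace BddPCc

variable {f : ℝ → ℂ} (hf : BddPCc f)
include hf

lemma continuousAt {u : ℝ} (hu : u ∉ range ((↑) : ℤ → ℝ)) : ContinuousAt f u :=
  hf.2.1.continuousAt (isOpen_setOf_forall_ne_intCast.mem_nhds (by
    rw [setOf_forall_ne_intCast]
    exact hu))

lemma aestronglyMeasurable : AEStronglyMeasurable f volume := by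
  have h := hf.2.1.aestronglyMeasurable (μ := volume) isOpen_setOf_forall_ne_intCast.measurableSet
  rwa [setOf_forall_ne_intCast, Measure.restrict_eq_self_of_ae_mem (s := (range _)ᶜ)
    ((countable_range _).ae_notMem volume)] at h

end BddPCc

theorem ZAlmostAutomorphicC.almostAutomorphicC_expConv {α : ℂ} (hα : α.re < 0) {f : ℝ → ℂ}
    (hf : ZAlmostAutomorphicC f) : AlmostAutomorphicC (expConv α f) := by
  obtain ⟨hpc, hseq⟩ := hf
  obtain ⟨C, hC⟩ := hpc.1
  have hm := hpc.aestronglyMeasurable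
  refine ⟨⟨_, norm_expConv_le hα hC⟩, (lipschitzWith_expConv hα hm hC).continuous, fun s => ?_⟩
  obtain ⟨r, -, φ₀, hφ₀, hr⟩ := (isCompact_Icc (a := (0 : ℝ)) (b := 1)).tendsto_subseq
    (x := fun n => Int.fract (s n)) fun n => ⟨Int.fract_nonneg _, (Int.fract_lt_one _).le⟩
  obtain ⟨φ₁, g, hφ₁, hfg, hgf⟩ := hseq fun n => ⌊s (φ₀ n)⌋
  set m : ℕ → ℝ := fun n => ⌊s (φ₀ (φ₁ n))⌋
  set q : ℕ → ℝ := fun n => Int.fract (s (φ₀ (φ₁ n)))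
  have hsplit : ∀ n, s (φ₀ (φ₁ n)) = m n + q n := fun n => (Int.floor_add_fract _).symm
  have hq : Tendsto q atTop (𝓝 r) := hr.comp hφ₁.tendsto_atTop
  have hgC : ∀ u, ‖g u‖ ≤ C := fun u => le_of_tendsto' (hfg u).norm fun n => hC _
  have hgm : AEStronglyMeasurable g volume :=
    aestronglyMeasurable_of_tendsto_ae atTop (fun n => hm.comp_add_right (m n)) (ae_of_all _ hfg)
  refine ⟨φ₀ ∘ φ₁, fun t => expConv α g (t + r), hφ₀.comp hφ₁, fun t => ?_, fun t => ?_⟩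
  · refine (tendsto_expConv hα (fun n => hm.comp_add_right (m n)) (fun n u => hC _) hfg
      (tendsto_const_nhds.add hq)).congr fun n => ?_
    rw [expConv_comp_add_right, Function.comp_apply]
    congr 1
    linarith [hsplit n]
  · have hgf' : ∀ u, Tendsto (fun n => g (u + -m n)) atTop (𝓝 (f u)) := fun u => by
      simpa [sub_eq_add_neg] using hgf u
    have := tendsto_expConv hα (fun n => hgm.comp_add_right (-m n)) (fun n u => hgC _) hgf'
      (((tendsto_const_nhds (x := t)).sub hq).add_const r)
    rw [sub_add_cancel] at this
    refine this.congr fun n => ?_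
    rw [expConv_comp_add_right, Function.comp_apply]
    congr 1
    linarith [hsplit n]

/-- For `Re α < 0` and `f` `ℤ`-almost automorphic, `x₁(t) = ∫_{-∞}^t e^{α(t-s)} f(s) ds`
is well defined and is the unique almost automorphic solution of `x' = α x + f`
(understood in the integrated sense). -/
theorem unique_aa_solution_re_neg (α : ℂ) (hα : α.re < 0)
    (f : ℝ → ℂ) (hf : ZAlmostAutomorphicC f) :
    (∀ t : ℝ, IntegrableOn (fun s : ℝ => Complex.exp (α * (t - s)) * f s) (Set.Iic t)) ∧
    AlmostAutomorphicC (fun t : ℝ => ∫ s in Set.Iic t, Complex.exp (α * (t - s)) * f s) ∧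
    (∀ s t : ℝ, s ≤ t →
      (∫ u in Set.Iic t, Complex.exp (α * (t - u)) * f u) =
        (∫ u in Set.Iic s, Complex.exp (α * (s - u)) * f u) +
          ∫ u in s..t,
            (α * (∫ r in Set.Iic u, Complex.exp (α * (u - r)) * f r) + f u)) ∧
    (∀ y : ℝ → ℂ, AlmostAutomorphicC y →
      (∀ s t : ℝ, s ≤ t → y t = y s + ∫ u in s..t, (α * y u + f u)) →
      y = fun t : ℝ => ∫ s in Set.Iic t, Complex.exp (α * (t - s)) * f s) := by
  obtain ⟨C, hC⟩ := hf.1.1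
  have hm := hf.1.aestronglyMeasurable
  have hx : ∀ s t, s ≤ t →
      expConv α f t = expConv α f s + ∫ u in s..t, (α * expConv α f u + f u) :=
    fun s t => expConv_eq_add_integral hα hm hC (countable_range _) fun u => hf.1.continuousAt
  refine ⟨integrableOn_expConv_integrand hα hm hC, hf.almostAutomorphicC_expConv hα, hx, ?_⟩
  rintro y ⟨⟨D, hD⟩, hy, -⟩ hyeq
  exact eq_of_bounded_of_eq_add_integral hα (intervalIntegrable_of_norm_le_s11 hm hC) hy
    (lipschitzWith_expConv hα hm hC).continuous hD (norm_expConv_le hα hC) hyeq hx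
end

section
/- Let A, B ∈ M_{p×p}(ℝ) and let f : ℝ → ℂ^p be Z-almost automorphic. Let x : ℝ → ℂ^p be a bounded solution of the differential equation with piecewise constant argument x'(t) = A x(t) + B x(⌊t⌋) + f(t), i.e. a bounded continuous function satisfying x(t) = x(s) + ∫_s^t (A x(u) + B x(⌊u⌋) + f(u)) du for all s ≤ t. Then x is almost automorphic (in Bochner's sense) if and only if the sequence n ↦ x(n), n ∈ ℤ, is discrete almost automorphic. -/
open MeasureTheory Filter Topology

/-- Multiplication of a complex vector by a real matrix. -/
noncomputable def RMulVec {p : ℕ} (A : Matrix (Fin p) (Fin p) ℝ) (x : Fin p → ℂ) :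
    Fin p → ℂ :=
  fun i => ∑ j, ((A i j : ℝ) : ℂ) * x j

/-- A (continuous) solution of the DEPCA `x'(t) = A x(t) + B x(⌊t⌋) + f(t)`, in the
integrated sense. -/
def IsDEPCASolution {p : ℕ} (A B : Matrix (Fin p) (Fin p) ℝ) (f : ℝ → Fin p → ℂ)
    (x : ℝ → Fin p → ℂ) : Prop :=
  Continuous x ∧
  ∀ s t : ℝ, s ≤ t →
    x t = x s + ∫ u in s..t, (RMulVec A (x u) + RMulVec B (x ((⌊u⌋ : ℤ) : ℝ)) + f u)

/-- Discrete almost automorphic sequences `ℤ → ℂ^p`. -/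
def DiscreteAA (p : ℕ) (f : ℤ → Fin p → ℂ) : Prop :=
  ∀ s : ℕ → ℤ, ∃ (φ : ℕ → ℕ) (g : ℤ → Fin p → ℂ), StrictMono φ ∧
    (∀ k : ℤ, Tendsto (fun n => f (k + s (φ n))) atTop (𝓝 (g k))) ∧
    (∀ k : ℤ, Tendsto (fun n => g (k - s (φ n))) atTop (𝓝 (f k)))

/-!
Write a real shift as `s = m + r` with `m = ⌊s⌋`; along a subsequence the fractional parts
converge, and bounded solutions with bounded forcing are uniformly Lipschitz, so only integer
shifts matter. Integer translates of a solution solve the equation with translated forcing. On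
`[⌊t⌋, t]` the delayed term is the constant `B x(⌊t⌋)`, so Grönwall's inequality bounds the
distance of two solutions at `t` by their distance at `⌊t⌋` and the `L¹` distance of the
forcings. Hence solutions whose values at the integers and whose forcings converge pointwise
converge everywhere, to a solution of the limit equation. Applied to `x(· + mₙ)` and then to the
limit translated back by `-mₙ`, this gives a solution with forcing `f` agreeing with `x` on `ℤ`,
which is `x` by the same estimate.
-/

section Gronwall

open Set Real

theorem le_mul_exp_of_le_add_mul_integral {v : ℝ → ℝ} {a b c K : ℝ} (hab : a ≤ b) (hK : 0 ≤ K)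
    (hv : Continuous v) (h : ∀ τ ∈ Icc a b, v τ ≤ c + K * ∫ u in a..τ, v u) :
    v b ≤ c * exp (K * (b - a)) := by
  set W : ℝ → ℝ := fun τ => c + K * ∫ u in a..τ, v u
  have hW : ∀ τ, HasDerivAt W (K * v τ) τ := fun τ =>
    ((intervalIntegral.integral_hasDerivAt_right (hv.intervalIntegrable _ _)
      (hv.stronglyMeasurableAtFilter _ _) hv.continuousAt).const_mul K).const_add c
  have hWb := le_gronwallBound_of_liminf_deriv_right_le (f := W) (δ := c) (ε := 0)
    (fun τ _ => (hW τ).continuousAt.continuousWithinAt)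
    (fun τ _ _ hr => (hW τ).hasDerivWithinAt.liminf_right_slope_le hr)
    (by simp [W])
    (fun τ hτ => by simpa using mul_le_mul_of_nonneg_left (h τ (Ico_subset_Icc_self hτ)) hK)
    b ⟨hab, le_rfl⟩
  rw [gronwallBound_ε0] at hWb
  exact (h b ⟨hab, le_rfl⟩).trans hWb

end Gronwall

section LinearIntegralEquation

open Set Real

variable {E : Type*} [NormedAddCommGroup E] [NormedSpace ℝ E]

theorem norm_le_of_eq_add_integral {L : E →L[ℝ] E} {w R : ℝ → E} {σ t : ℝ} (hσt : σ ≤ t)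
    (hw : Continuous w) (hR : IntervalIntegrable R volume σ t)
    (heq : ∀ τ ∈ Icc σ t, w τ = w σ + ∫ u in σ..τ, (L (w u) + R u)) :
    ‖w t‖ ≤ (‖w σ‖ + ∫ u in σ..t, ‖R u‖) * exp (‖L‖ * (t - σ)) := by
  refine le_mul_exp_of_le_add_mul_integral hσt (norm_nonneg _) hw.norm fun τ hτ => ?_
  have hRτ : IntervalIntegrable R volume σ τ :=
    hR.mono_set (uIcc_subset_uIcc_left (mem_uIcc_of_le hτ.1 hτ.2))
  calc ‖w τ‖ ≤ ‖w σ‖ + ∫ u in σ..τ, ‖L (w u) + R u‖ := by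
        rw [heq τ hτ]
        grw [norm_add_le, intervalIntegral.norm_integral_le_integral_norm hτ.1]
    _ ≤ ‖w σ‖ + ∫ u in σ..τ, (‖L‖ * ‖w u‖ + ‖R u‖) := by
        gcongr
        refine intervalIntegral.integral_mono_on hτ.1 ?_ ?_ fun u _ =>
          (norm_add_le _ _).trans (by gcongr; exact L.le_opNorm _)
        · exact (((L.continuous.comp hw).intervalIntegrable _ _).add hRτ).norm
        · exact ((hw.norm.intervalIntegrable _ _).const_mul _).add hRτ.norm
    _ ≤ (‖w σ‖ + ∫ u in σ..t, ‖R u‖) + ‖L‖ * ∫ u in σ..τ, ‖w u‖ := by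
        rw [intervalIntegral.integral_add ((hw.norm.intervalIntegrable _ _).const_mul _) hRτ.norm,
          intervalIntegral.integral_const_mul]
        have : ∫ u in σ..τ, ‖R u‖ ≤ ∫ u in σ..t, ‖R u‖ :=
          intervalIntegral.integral_mono_interval le_rfl hτ.1 hτ.2
            (ae_of_all _ fun _ => norm_nonneg _) hR.norm
        linarith

end LinearIntegralEquation

section Measurability

theorem Set.Countable.aestronglyMeasurable_of_continuousOn_compl {α β : Type*}
    [MeasurableSpace α] [TopologicalSpace α] [OpensMeasurableSpace α] [MeasurableSingletonClass α]
    [TopologicalSpace β] [TopologicalSpace.PseudoMetrizableSpace β]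
    [SecondCountableTopologyEither α β] {μ : Measure α} [NullSingletonClass μ] {s : Set α}
    {f : α → β} (hs : s.Countable) (hf : ContinuousOn f sᶜ) : AEStronglyMeasurable f μ := by
  have := hf.aestronglyMeasurable (μ := μ) hs.measurableSet.compl
  rwa [Measure.restrict_eq_self_of_ae_mem (s := sᶜ) (hs.ae_notMem μ)] at this

theorem MeasureTheory.AEStronglyMeasurable.locallyIntegrable_of_norm_le {α E : Type*}
    [MeasurableSpace α] [TopologicalSpace α] [NormedAddCommGroup E] {μ : Measure α}
    [IsLocallyFiniteMeasure μ] {f : α → E} {C : ℝ} (hm : AEStronglyMeasurable f μ)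
    (hC : ∀ x, ‖f x‖ ≤ C) : LocallyIntegrable f μ :=
  (locallyIntegrable_const C).mono hm (ae_of_all _ fun x => (hC x).trans (le_abs_self C))

end Measurability

theorem LipschitzWith.tendsto_comp_of_tendsto_dist {α β ι : Type*} [PseudoMetricSpace α]
    [PseudoMetricSpace β] {K : NNReal} {g : α → β} (hg : LipschitzWith K g) {l : Filter ι}
    {u v : ι → α} {b : β} (hu : Tendsto (fun i => g (u i)) l (𝓝 b))
    (huv : Tendsto (fun i => dist (u i) (v i)) l (𝓝 0)) : Tendsto (fun i => g (v i)) l (𝓝 b) :=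
  hu.congr_dist (squeeze_zero (fun _ => dist_nonneg) (fun i => hg.dist_le_mul (u i) (v i))
    (by simpa using huv.const_mul (K : ℝ)))

section RMulVec

variable {p : ℕ} {A B : Matrix (Fin p) (Fin p) ℝ}

noncomputable def rmulVecCLM (A : Matrix (Fin p) (Fin p) ℝ) : (Fin p → ℂ) →L[ℝ] (Fin p → ℂ) :=
  (LinearMap.toContinuousLinearMap (Matrix.mulVecLin (A.map ((↑) : ℝ → ℂ)))).restrictScalars ℝ

theorem rmulVecCLM_apply (A : Matrix (Fin p) (Fin p) ℝ) (v : Fin p → ℂ) :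
    rmulVecCLM A v = RMulVec A v := by
  ext i
  simp [rmulVecCLM, Matrix.mulVec, dotProduct, RMulVec]

theorem isDEPCASolution_iff {f x : ℝ → Fin p → ℂ} :
    IsDEPCASolution A B f x ↔ Continuous x ∧ ∀ s t : ℝ, s ≤ t →
      x t = x s + ∫ u in s..t, (rmulVecCLM A (x u) + (rmulVecCLM B (x ⌊u⌋) + f u)) := by
  simp only [IsDEPCASolution, rmulVecCLM_apply, add_assoc]

theorem norm_rmulVecCLM_add_rmulVecCLM_add_le {v w c : Fin p → ℂ} {C Cf : ℝ} (hv : ‖v‖ ≤ C)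
    (hw : ‖w‖ ≤ C) (hc : ‖c‖ ≤ Cf) :
    ‖rmulVecCLM A v + (rmulVecCLM B w + c)‖ ≤ ‖rmulVecCLM A‖ * C + ‖rmulVecCLM B‖ * C + Cf := by
  grw [norm_add_le, norm_add_le, (rmulVecCLM A).le_opNorm_of_le hv,
    (rmulVecCLM B).le_opNorm_of_le hw, hc, add_assoc]

end RMulVec

namespace IsDEPCASolution

open Set Real

variable {p : ℕ} {A B : Matrix (Fin p) (Fin p) ℝ}

theorem comp_add_intCast {f x : ℝ → Fin p → ℂ} (hx : IsDEPCASolution A B f x) (m : ℤ) :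
    IsDEPCASolution A B (fun t => f (t + m)) (fun t => x (t + m)) := by
  refine ⟨hx.1.comp (continuous_add_const _), fun s t hst => ?_⟩
  beta_reduce
  rw [hx.2 (s + m) (t + m) (by linarith), ← intervalIntegral.integral_comp_add_right]
  simp only [Int.floor_add_intCast, Int.cast_add]

theorem lipschitzWith {f x : ℝ → Fin p → ℂ} (hx : IsDEPCASolution A B f x) {C Cf : ℝ}
    (hxC : ∀ t, ‖x t‖ ≤ C) (hfC : ∀ t, ‖f t‖ ≤ Cf) :
    LipschitzWith (‖rmulVecCLM A‖ * C + ‖rmulVecCLM B‖ * C + Cf).toNNReal x := by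
  have key : ∀ a b, a ≤ b → dist (x b) (x a) ≤
      (‖rmulVecCLM A‖ * C + ‖rmulVecCLM B‖ * C + Cf) * dist b a := fun a b hab => by
    rw [dist_eq_norm, (isDEPCASolution_iff.1 hx).2 a b hab, add_sub_cancel_left, Real.dist_eq]
    exact intervalIntegral.norm_integral_le_of_norm_le_const fun u _ =>
      norm_rmulVecCLM_add_rmulVecCLM_add_le (hxC _) (hxC _) (hfC _)
  refine LipschitzWith.of_dist_le' fun a b => ?_
  rcases le_total a b with hab | hba
  · rw [dist_comm, dist_comm a]; exact key a b hab
  · exact key b a hba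

theorem norm_sub_le {f g x y : ℝ → Fin p → ℂ} (hx : IsDEPCASolution A B f x)
    (hy : IsDEPCASolution A B g y) (hf : LocallyIntegrable f volume)
    (hg : LocallyIntegrable g volume) (t : ℝ) :
    ‖x t - y t‖ ≤ (‖x ⌊t⌋ - y ⌊t⌋‖ +
      ∫ u in (⌊t⌋ : ℝ)..t, ‖rmulVecCLM B (x ⌊t⌋ - y ⌊t⌋) + (f u - g u)‖) *
        exp (‖rmulVecCLM A‖ * (t - ⌊t⌋)) := by
  set k : ℝ := (⌊t⌋ : ℝ)
  have hkt : k ≤ t := Int.floor_le t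
  have hfloor : ∀ τ ∈ Icc k t, ∀ u ∈ uIcc k τ, ⌊u⌋ = ⌊t⌋ := fun τ hτ u hu => by
    rw [uIcc_of_le hτ.1] at hu
    exact Int.floor_eq_iff.2 ⟨hu.1, hu.2.trans_lt ((hτ.2).trans_lt (Int.lt_floor_add_one t))⟩
  have hII : ∀ {h : ℝ → Fin p → ℂ}, LocallyIntegrable h volume → ∀ a b : ℝ,
      IntervalIntegrable h volume a b := fun hh a b =>
    (hh.integrableOn_isCompact isCompact_uIcc).intervalIntegrable
  have hsol : ∀ {h z : ℝ → Fin p → ℂ}, IsDEPCASolution A B h z → LocallyIntegrable h volume →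
      ∀ τ ∈ Icc k t, z τ = z k + ∫ u in k..τ, (rmulVecCLM A (z u) + (rmulVecCLM B (z k) + h u)) :=
    fun hz hh τ hτ => by
      rw [(isDEPCASolution_iff.1 hz).2 k τ hτ.1]
      congr 1
      refine intervalIntegral.integral_congr fun u hu => ?_
      simp only [hfloor τ hτ u hu, k]
  refine norm_le_of_eq_add_integral hkt (hx.1.sub hy.1)
    (intervalIntegrable_const.add ((hII hf k t).sub (hII hg k t))) fun τ hτ => ?_
  have hI : ∀ {h z : ℝ → Fin p → ℂ}, Continuous z → LocallyIntegrable h volume →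
      IntervalIntegrable (fun u => rmulVecCLM A (z u) + (rmulVecCLM B (z k) + h u)) volume k τ :=
    fun hz hh => ((rmulVecCLM A).continuous.comp hz).intervalIntegrable _ _ |>.add
      (intervalIntegrable_const.add (hII hh k τ))
  rw [Pi.sub_apply, Pi.sub_apply, hsol hx hf τ hτ, hsol hy hg τ hτ, add_sub_add_comm,
    ← intervalIntegral.integral_sub (hI hx.1 hf) (hI hy.1 hg)]
  congr 1
  refine intervalIntegral.integral_congr fun u _ => ?_
  simp only [Pi.sub_apply, map_sub]
  abel

theorem eq_of_forall_intCast_eq {f x y : ℝ → Fin p → ℂ} (hx : IsDEPCASolution A B f x)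
    (hy : IsDEPCASolution A B f y) (hf : LocallyIntegrable f volume) (h : ∀ k : ℤ, x k = y k) :
    x = y := by
  funext t
  simpa [h, sub_eq_zero] using hx.norm_sub_le hy hf hf t

theorem cauchySeq_of_tendsto_intCast {x f : ℕ → ℝ → Fin p → ℂ} {a : ℤ → Fin p → ℂ}
    {h : ℝ → Fin p → ℂ} {C Cf : ℝ} (hx : ∀ n, IsDEPCASolution A B (f n) (x n))
    (hxC : ∀ n t, ‖x n t‖ ≤ C) (hfC : ∀ n t, ‖f n t‖ ≤ Cf)
    (hfm : ∀ n, AEStronglyMeasurable (f n) volume)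
    (hxa : ∀ k : ℤ, Tendsto (fun n => x n k) atTop (𝓝 (a k)))
    (hfh : ∀ t, Tendsto (fun n => f n t) atTop (𝓝 (h t))) (t : ℝ) :
    CauchySeq fun n => x n t := by
  rw [cauchySeq_iff_tendsto_dist_atTop_0, ← prod_atTop_atTop_eq]
  have hk : Tendsto (fun n : ℕ × ℕ => x n.1 ⌊t⌋ - x n.2 ⌊t⌋) (atTop ×ˢ atTop) (𝓝 0) := by
    simpa using ((hxa ⌊t⌋).comp tendsto_fst).sub ((hxa ⌊t⌋).comp tendsto_snd)
  have hlim : ∀ u, Tendsto (fun n : ℕ × ℕ =>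
      ‖rmulVecCLM B (x n.1 ⌊t⌋ - x n.2 ⌊t⌋) + (f n.1 u - f n.2 u)‖) (atTop ×ˢ atTop) (𝓝 0) :=
    fun u => by
      simpa using ((((rmulVecCLM B).continuous.tendsto 0).comp hk).add
        (((hfh u).comp tendsto_fst).sub ((hfh u).comp tendsto_snd))).norm
  have hint := intervalIntegral.tendsto_integral_filter_of_dominated_convergence
    (a := ⌊t⌋) (b := t) (f := fun _ => (0 : ℝ))
    (fun _ => ‖rmulVecCLM B‖ * (C + C) + (Cf + Cf))
    (Eventually.of_forall fun n => by
      have := hfm n.1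
      have := hfm n.2
      fun_prop)
    (Eventually.of_forall fun n => ae_of_all _ fun u _ => by
      rw [norm_norm]
      exact norm_add_le_of_le ((rmulVecCLM B).le_opNorm_of_le
        (norm_sub_le_of_le (hxC _ _) (hxC _ _))) (norm_sub_le_of_le (hfC _ _) (hfC _ _)))
    intervalIntegrable_const (ae_of_all _ fun u _ => hlim u)
  rw [intervalIntegral.integral_zero] at hint
  have hbound := (hk.norm.add hint).mul_const (exp (‖rmulVecCLM A‖ * (t - ⌊t⌋)))
  rw [norm_zero, zero_add, zero_mul] at hbound
  refine squeeze_zero (fun _ => dist_nonneg) (fun n => ?_) hbound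
  rw [dist_eq_norm]
  exact (hx n.1).norm_sub_le (hx n.2) ((hfm n.1).locallyIntegrable_of_norm_le (hfC n.1))
    ((hfm n.2).locallyIntegrable_of_norm_le (hfC n.2)) t

theorem exists_tendsto_of_tendsto_intCast {x f : ℕ → ℝ → Fin p → ℂ} {a : ℤ → Fin p → ℂ}
    {h : ℝ → Fin p → ℂ} {C Cf : ℝ} (hx : ∀ n, IsDEPCASolution A B (f n) (x n))
    (hxC : ∀ n t, ‖x n t‖ ≤ C) (hfC : ∀ n t, ‖f n t‖ ≤ Cf)
    (hfm : ∀ n, AEStronglyMeasurable (f n) volume)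
    (hxa : ∀ k : ℤ, Tendsto (fun n => x n k) atTop (𝓝 (a k)))
    (hfh : ∀ t, Tendsto (fun n => f n t) atTop (𝓝 (h t))) :
    ∃ y, IsDEPCASolution A B h y ∧ ∀ t, Tendsto (fun n => x n t) atTop (𝓝 (y t)) := by
  choose y hy using fun t =>
    cauchySeq_tendsto_of_complete (cauchySeq_of_tendsto_intCast hx hxC hfC hfm hxa hfh t)
  refine ⟨y, isDEPCASolution_iff.2 ⟨?_, fun s t hst => ?_⟩, hy⟩
  · exact ((isClosed_setOfPred_lipschitzWith _).mem_of_tendsto (tendsto_pi_nhds.2 hy)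
      (Eventually.of_forall fun n => (hx n).lipschitzWith (hxC n) (hfC n))).continuous
  have hint := intervalIntegral.tendsto_integral_filter_of_dominated_convergence
    (a := s) (b := t) (l := atTop)
    (F := fun n u => rmulVecCLM A (x n u) + (rmulVecCLM B (x n ⌊u⌋) + f n u))
    (f := fun u => rmulVecCLM A (y u) + (rmulVecCLM B (y ⌊u⌋) + h u))
    (fun _ => ‖rmulVecCLM A‖ * C + ‖rmulVecCLM B‖ * C + Cf)
    (Eventually.of_forall fun n => by
      have := (hx n).1
      have := hfm n
      fun_prop)
    (Eventually.of_forall fun n => ae_of_all _ fun u _ =>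
      norm_rmulVecCLM_add_rmulVecCLM_add_le (hxC _ _) (hxC _ _) (hfC _ _))
    intervalIntegrable_const
    (ae_of_all _ fun u _ => (((rmulVecCLM A).continuous.tendsto _).comp (hy u)).add
      ((((rmulVecCLM B).continuous.tendsto _).comp (hy _)).add (hfh u)))
  exact tendsto_nhds_unique (hy t) (((hy s).add hint).congr fun n =>
    ((isDEPCASolution_iff.1 (hx n)).2 s t hst).symm)

theorem exists_tendsto_comp_add_intCast {f x : ℝ → Fin p → ℂ} (hx : IsDEPCASolution A B f x)
    {C Cf : ℝ} (hxC : ∀ t, ‖x t‖ ≤ C) (hfC : ∀ t, ‖f t‖ ≤ Cf)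
    (hfm : AEStronglyMeasurable f volume) {m : ℕ → ℤ} {a : ℤ → Fin p → ℂ}
    {h : ℝ → Fin p → ℂ} (hxa : ∀ k : ℤ, Tendsto (fun n => x (k + m n)) atTop (𝓝 (a k)))
    (hax : ∀ k : ℤ, Tendsto (fun n => a (k - m n)) atTop (𝓝 (x k)))
    (hfh : ∀ t, Tendsto (fun n => f (t + m n)) atTop (𝓝 (h t)))
    (hhf : ∀ t, Tendsto (fun n => h (t - m n)) atTop (𝓝 (f t))) :
    ∃ y : ℝ → Fin p → ℂ,
      LipschitzWith (‖rmulVecCLM A‖ * C + ‖rmulVecCLM B‖ * C + Cf).toNNReal y ∧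
      (∀ t, Tendsto (fun n => x (t + m n)) atTop (𝓝 (y t))) ∧
      ∀ t, Tendsto (fun n => y (t - m n)) atTop (𝓝 (x t)) := by
  have htrans : ∀ {g : ℝ → Fin p → ℂ}, AEStronglyMeasurable g volume → ∀ c : ℝ,
      AEStronglyMeasurable (fun t => g (t + c)) volume := fun hg c =>
    hg.comp_measurePreserving (measurePreserving_add_right volume c)
  obtain ⟨y, hy, hxy⟩ := exists_tendsto_of_tendsto_intCast (x := fun n t => x (t + m n))
    (fun n => hx.comp_add_intCast (m n)) (fun _ _ => hxC _) (fun _ _ => hfC _)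
    (fun n => htrans hfm _) hxa hfh
  have hyC : ∀ t, ‖y t‖ ≤ C := fun t => le_of_tendsto' (hxy t).norm fun _ => hxC _
  have hhC : ∀ t, ‖h t‖ ≤ Cf := fun t => le_of_tendsto' (hfh t).norm fun _ => hfC _
  have hhm : AEStronglyMeasurable h volume :=
    aestronglyMeasurable_of_tendsto_ae atTop (fun n => htrans hfm _) (ae_of_all _ hfh)
  have hya : ∀ k : ℤ, y k = a k := fun k => tendsto_nhds_unique (hxy k) (hxa k)
  have hyx : ∀ k : ℤ, Tendsto (fun n => y (k + ↑(-m n))) atTop (𝓝 (x k)) := fun k => by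
    simpa [← sub_eq_add_neg, ← Int.cast_sub, hya] using hax k
  obtain ⟨z, hz, hyz⟩ := exists_tendsto_of_tendsto_intCast (x := fun n t => y (t + ↑(-m n)))
    (fun n => hy.comp_add_intCast (-m n)) (fun _ _ => hyC _) (fun _ _ => hhC _)
    (fun n => htrans hhm _) hyx (fun t => by simpa [← sub_eq_add_neg] using hhf t)
  have hzx : z = x := hz.eq_of_forall_intCast_eq hx (hfm.locallyIntegrable_of_norm_le hfC)
    fun k => tendsto_nhds_unique (hyz k) (hyx k)
  exact ⟨y, hy.lipschitzWith hyC hhC, hxy, fun t => by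
    simpa [hzx, ← sub_eq_add_neg] using hyz t⟩

end IsDEPCASolution

theorem AlmostAutomorphic.discreteAA_comp_intCast {p : ℕ} {x : ℝ → Fin p → ℂ}
    (hx : AlmostAutomorphic p x) : DiscreteAA p fun n : ℤ => x n := fun s => by
  obtain ⟨φ, g, hφ, hxg, hgx⟩ := hx.2.2 fun n => s n
  exact ⟨φ, fun k => g k, hφ, fun k => by simpa using hxg k, fun k => by simpa using hgx k⟩

theorem IsDEPCASolution.almostAutomorphic_of_discreteAA {p : ℕ} {A B : Matrix (Fin p) (Fin p) ℝ}
    {f x : ℝ → Fin p → ℂ} (hx : IsDEPCASolution A B f x) (hxb : ∃ C : ℝ, ∀ t : ℝ, ‖x t‖ ≤ C)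
    (hf : ZAlmostAutomorphic p f) (hD : DiscreteAA p fun n : ℤ => x n) :
    AlmostAutomorphic p x := by
  obtain ⟨C, hxC⟩ := hxb
  obtain ⟨⟨⟨Cf, hfC⟩, hfc, -⟩, hfZ⟩ := hf
  have hfm : AEStronglyMeasurable f volume := by
    refine (Set.countable_range ((↑) : ℤ → ℝ)).aestronglyMeasurable_of_continuousOn_compl ?_
    convert hfc using 1
    ext t
    simp [eq_comm]
  refine ⟨⟨C, hxC⟩, hx.1, fun s => ?_⟩
  obtain ⟨r, -, φ₁, hφ₁, hr⟩ := isCompact_Icc.tendsto_subseq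
    fun n => (⟨Int.fract_nonneg (s n), (Int.fract_lt_one (s n)).le⟩ : Int.fract (s n) ∈ Set.Icc 0 1)
  obtain ⟨φ₂, a, hφ₂, hxa, hax⟩ := hD fun n => ⌊s (φ₁ n)⌋
  obtain ⟨φ₃, h, hφ₃, hfh, hhf⟩ := hfZ fun n => ⌊s (φ₁ (φ₂ n))⌋
  set φ := fun n => φ₁ (φ₂ (φ₃ n))
  obtain ⟨y, hyL, hxy, hyx⟩ := hx.exists_tendsto_comp_add_intCast (m := fun n => ⌊s (φ n)⌋)
    hxC hfC hfm (fun k => by simpa [Function.comp_def, φ] using (hxa k).comp hφ₃.tendsto_atTop)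
    (fun k => by simpa [Function.comp_def, φ] using (hax k).comp hφ₃.tendsto_atTop) hfh hhf
  have hfract : Tendsto (fun n => |s (φ n) - ⌊s (φ n)⌋ - r|) atTop (𝓝 0) := by
    simpa [Int.self_sub_floor, Real.dist_eq] using
      tendsto_iff_dist_tendsto_zero.1 (hr.comp (hφ₂.comp hφ₃).tendsto_atTop)
  refine ⟨φ, fun t => y (t + r), hφ₁.comp (hφ₂.comp hφ₃), fun t => ?_, fun t => ?_⟩
  · refine (hx.lipschitzWith hxC hfC).tendsto_comp_of_tendsto_dist (hxy (t + r)) ?_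
    exact hfract.congr fun n => by rw [Real.dist_eq, abs_sub_comm]; ring_nf
  · refine hyL.tendsto_comp_of_tendsto_dist (hyx t) ?_
    exact hfract.congr fun n => by rw [Real.dist_eq]; ring_nf

/-- A bounded solution `x` of the DEPCA `x'(t) = A x(t) + B x(⌊t⌋) + f(t)` with `f`
`ℤ`-almost automorphic is almost automorphic if and only if its restriction to `ℤ`
is discrete almost automorphic. -/
theorem bounded_depca_solution_aa_iff_discrete_aa {p : ℕ}
    (A B : Matrix (Fin p) (Fin p) ℝ)
    (f : ℝ → Fin p → ℂ) (hf : ZAlmostAutomorphic p f)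
    (x : ℝ → Fin p → ℂ) (hxb : ∃ C : ℝ, ∀ t : ℝ, ‖x t‖ ≤ C)
    (hx : IsDEPCASolution A B f x) :
    AlmostAutomorphic p x ↔ DiscreteAA p (fun n : ℤ => x (n : ℝ)) :=
  ⟨AlmostAutomorphic.discreteAA_comp_intCast, hx.almostAutomorphic_of_discreteAA hxb hf⟩
end
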